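/- arXiv:1912.05430 — 10 statements merged into one kernel-verified Lean document; each statement's English description precedes it below -/
import Mathlib

section
/- For every integer n ≥ 2, the inequality 2√π · (n-1)^(2n-2) · (2n-2) / ((2n-2)! · √(4n-3)) · (2/e)^(2n-2) ≤ 1 holds. -/
open Real

lemma sqrt_pi_le_stirlingSeq (j : ℕ) : Real.sqrt π ≤ Stirling.stirlingSeq (j + 1) := by
  have ht : Filter.Tendsto (Stirling.stirlingSeq ∘ Nat.succ) Filter.atTop (nhds (Real.sqrt π)) :=
    Stirling.tendsto_stirlingSeq_sqrt_pi.comp (Filter.tendsto_add_atTop_nat 1)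
  exact Stirling.stirlingSeq'_antitone.le_of_tendsto ht j

lemma stirling_lower (m : ℕ) (hm : 1 ≤ m) :
    Real.sqrt π * (Real.sqrt (2 * (m : ℝ)) * ((m / Real.exp 1) ^ m)) ≤ (Nat.factorial m : ℝ) := by
  obtain ⟨j, rfl⟩ : ∃ j, m = j + 1 := ⟨m - 1, by omega⟩
  have h := sqrt_pi_le_stirlingSeq j
  rw [Stirling.stirlingSeq] at h
  have hpos : 0 < Real.sqrt (2 * ((j + 1 : ℕ) : ℝ)) * (((j + 1 : ℕ) : ℝ) / Real.exp 1) ^ (j + 1) := by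
    have : (0:ℝ) < ((j + 1 : ℕ) : ℝ) := by positivity
    positivity
  rw [le_div_iff₀ hpos] at h
  convert h using 3 <;> push_cast <;> ring

theorem stmt_0 (n : ℕ) (hn : 2 ≤ n) :
    2 * Real.sqrt π * ((n : ℝ) - 1) ^ (2 * n - 2) * (2 * (n : ℝ) - 2) /
        ((Nat.factorial (2 * n - 2) : ℝ) * Real.sqrt (4 * (n : ℝ) - 3)) *
        (2 / Real.exp 1) ^ (2 * n - 2) ≤ 1 := by
  obtain ⟨k, rfl⟩ : ∃ k, n = k + 2 := ⟨n - 2, by omega⟩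
  have hsub : 2 * (k + 2) - 2 = 2 * k + 2 := by omega
  rw [hsub]
  push_cast
  set e := Real.exp 1 with he
  have hepos : 0 < e := Real.exp_pos 1
  have hfpos : (0:ℝ) < (Nat.factorial (2 * k + 2) : ℝ) := by positivity
  have hspos : (0:ℝ) < Real.sqrt (4 * ((k:ℝ) + 2) - 3) := by
    apply Real.sqrt_pos.mpr; nlinarith [Nat.cast_nonneg (α := ℝ) k]
  rw [div_mul_eq_mul_div, div_le_one (by positivity)]
  have key : ((k:ℝ) + 2 - 1) ^ (2 * k + 2) * (2 / e) ^ (2 * k + 2)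
      = ((2 * (k:ℝ) + 2) / e) ^ (2 * k + 2) := by
    rw [← mul_pow]; congr 1; field_simp; ring
  have h2m : Real.sqrt (2 * (2 * (k:ℝ) + 2)) ^ 2 = 2 * (2 * (k:ℝ) + 2) :=
    Real.sq_sqrt (by positivity)
  have hfact := stirling_lower (2 * k + 2) (by omega)
  have hcast : ((2 * k + 2 : ℕ) : ℝ) = 2 * (k:ℝ) + 2 := by push_cast; ring
  rw [hcast] at hfact
  have hmono : Real.sqrt (2 * (2 * (k:ℝ) + 2)) ≤ Real.sqrt (4 * ((k:ℝ) + 2) - 3) :=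
    Real.sqrt_le_sqrt (by nlinarith [Nat.cast_nonneg (α := ℝ) k])
  calc 2 * Real.sqrt π * ((k:ℝ) + 2 - 1) ^ (2 * k + 2) * (2 * ((k:ℝ) + 2) - 2) * (2 / e) ^ (2 * k + 2)
      = Real.sqrt π * (((2 * (k:ℝ) + 2) / e) ^ (2 * k + 2)) * (2 * (2 * (k:ℝ) + 2)) := by
        rw [← key]; ring
    _ = Real.sqrt π * (((2 * (k:ℝ) + 2) / e) ^ (2 * k + 2)) * (Real.sqrt (2 * (2 * (k:ℝ) + 2))) ^ 2 := by
        rw [h2m]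
    _ = (Real.sqrt π * (Real.sqrt (2 * (2 * (k:ℝ) + 2)) * ((2 * (k:ℝ) + 2) / e) ^ (2 * k + 2)))
          * Real.sqrt (2 * (2 * (k:ℝ) + 2)) := by ring
    _ ≤ (Nat.factorial (2 * k + 2) : ℝ) * Real.sqrt (2 * (2 * (k:ℝ) + 2)) :=
        mul_le_mul_of_nonneg_right hfact (Real.sqrt_nonneg _)
    _ ≤ (Nat.factorial (2 * k + 2) : ℝ) * Real.sqrt (4 * ((k:ℝ) + 2) - 3) :=
        mul_le_mul_of_nonneg_left hmono (le_of_lt hfpos)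
end

section
/- For every integer n ≥ 2, the inequality 2√π · n^(2n-1) · (2n-1) / (e · (2n-1)! · √(4n-1)) · (2/e)^(2n-1) ≤ 1 holds. -/
open Real

/-!
Put `m = 2n - 1`, so that `2n = m + 1` and `4n - 1 = 2m + 1`. Then the claim reads
`2 √π m ((m + 1)/e)^m ≤ e m! √(2m + 1)`. Since `(1 + 1/m)^m ≤ e`, the left side is at most
`e √π · 2m · (m/e)^m`; as `2m ≤ √(2m) √(2m + 1)`, Stirling's lower bound
`√(2πm) (m/e)^m ≤ m!` finishes the proof.
-/

lemma succ_pow_le_exp_one_mul_pow (m : ℕ) : ((m : ℝ) + 1) ^ m ≤ exp 1 * (m : ℝ) ^ m := by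
  rcases eq_or_ne m 0 with rfl | hm
  · simp
  have hsucc : (m : ℝ) + 1 = m * (1 + (m : ℝ)⁻¹) := by field_simp
  rw [hsucc, mul_pow, mul_comm]
  gcongr
  exact one_add_inv_pow_le_exp

lemma self_le_sqrt_mul_sqrt_add_one {x : ℝ} (hx : 0 ≤ x) : x ≤ √x * √(x + 1) := by
  calc x = √x * √x := (mul_self_sqrt hx).symm
    _ ≤ √x * √(x + 1) := by gcongr; linarith

lemma two_mul_sqrt_pi_mul_succ_div_exp_pow_le (m : ℕ) :
    2 * √π * m * (((m : ℝ) + 1) / exp 1) ^ m ≤ exp 1 * m.factorial * √(2 * m + 1) := by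
  have hstirling : √π * √(2 * m) * ((m : ℝ) / exp 1) ^ m ≤ m.factorial := by
    have h := Stirling.le_factorial_stirling m
    rwa [show 2 * π * m = π * (2 * m) by ring, sqrt_mul pi_pos.le] at h
  calc 2 * √π * m * (((m : ℝ) + 1) / exp 1) ^ m
      = √π * (2 * m) * (((m : ℝ) + 1) ^ m / exp 1 ^ m) := by rw [div_pow]; ring
    _ ≤ √π * (√(2 * m) * √(2 * m + 1)) * (exp 1 * (m : ℝ) ^ m / exp 1 ^ m) := by
        gcongr √π * ?_ * (?_ / _)
        · exact self_le_sqrt_mul_sqrt_add_one (by positivity)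
        · exact succ_pow_le_exp_one_mul_pow m
    _ = exp 1 * (√π * √(2 * m) * ((m : ℝ) / exp 1) ^ m) * √(2 * m + 1) := by
        rw [div_pow]; ring
    _ ≤ exp 1 * m.factorial * √(2 * m + 1) := by gcongr

theorem stmt_1 (n : ℕ) (hn : 2 ≤ n) :
    2 * Real.sqrt π * (n : ℝ) ^ (2 * n - 1) * (2 * (n : ℝ) - 1) /
        (Real.exp 1 * (Nat.factorial (2 * n - 1) : ℝ) * Real.sqrt (4 * (n : ℝ) - 1)) *
        (2 / Real.exp 1) ^ (2 * n - 1) ≤ 1 := by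
  obtain ⟨m, hm⟩ : ∃ m, 2 * n - 1 = m := ⟨_, rfl⟩
  have hmn : (m : ℝ) + 1 = 2 * n := by
    rw [← hm, Nat.cast_sub (by omega)]
    push_cast
    ring
  have hden : 0 < exp 1 * m.factorial * √(2 * m + 1) := by positivity
  rw [hm, show 2 * (n : ℝ) - 1 = m by linarith, show 4 * (n : ℝ) - 1 = 2 * m + 1 by linarith,
    div_mul_eq_mul_div, div_le_one hden]
  calc 2 * √π * (n : ℝ) ^ m * m * (2 / exp 1) ^ m
      = 2 * √π * m * (((m : ℝ) + 1) / exp 1) ^ m := by rw [hmn, div_pow, div_pow, mul_pow]; ring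
    _ ≤ exp 1 * m.factorial * √(2 * m + 1) := two_mul_sqrt_pi_mul_succ_div_exp_pow_le m
end

section
/- For every integer k ≥ 1, the inequality ζ(k+1)·ξ(k) / ((2k)! · √(4k+1)) ≥ 1.15 / (2^(4k) · k) holds, where ζ(k+1) = ((k+1)/2)! · ((k-1)/2)! if k is odd and ζ(k+1) = ((k/2)!)^2 if k is even, and ξ(1) = 1/2, ξ(k) = ((k-1)/2)! · ((k-3)/2)! / 4 if k is odd with k ≥ 3, and ξ(k) = (((k-2)/2)!)^2 / 4 if k is even. -/
/-
Writing `k = 2n + 2` or `k = 2n + 3` (the case `k = 1` is a direct check), squaring removes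
`√(4k + 1)`, and after cancelling factorials both cases say that the multinomial coefficient
`(4n + 4)! / ((n + 1)!)^4` is at most a constant times `256^n / n^(3/2)`, its Stirling order.
In the form `(2n + 5) ((4n + 4)!)² ≤ 2880 · 2^(16n) (n + 1)^6 (n!)^8`, which is an equality at
`n = 0`, this bound survives induction: the ratio of consecutive terms reduces to a polynomial
inequality of degree 7. The remaining polynomial slack absorbs the constant `1.15`.
-/

open Real

/-- The factor ζ from the paper: ζ(n) = (n/2)!·((n-2)/2)! for even n and (((n-1)/2)!)² for odd n.
In particular ζ(k+1) = ((k+1)/2)!·((k-1)/2)! for odd k and ((k/2)!)² for even k. -/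
noncomputable def paperZeta (n : ℕ) : ℝ :=
  if Even n then (Nat.factorial (n / 2) : ℝ) * (Nat.factorial ((n - 2) / 2) : ℝ)
  else ((Nat.factorial ((n - 1) / 2) : ℝ)) ^ 2

/-- The factor ξ from the paper. -/
noncomputable def paperXi (k : ℕ) : ℝ :=
  if k = 1 then 1 / 2
  else if Odd k then (Nat.factorial ((k - 1) / 2) : ℝ) * (Nat.factorial ((k - 3) / 2) : ℝ) / 4
  else ((Nat.factorial ((k - 2) / 2) : ℝ)) ^ 2 / 4

open Nat

lemma factorial_four_mul_add_eight (n : ℕ) :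
    (4 * n + 8)! = (4 * n + 5) * (4 * n + 6) * (4 * n + 7) * (4 * n + 8) * (4 * n + 4)! := by
  simp only [Nat.factorial_succ]
  ring

theorem factorial_four_mul_add_four_sq_le (n : ℕ) :
    (2 * n + 5) * (4 * n + 4)! ^ 2 ≤ 2880 * (2 ^ (16 * n) * (n + 1) ^ 6 * n ! ^ 8) := by
  induction n with
  | zero => decide
  | succ n ih =>
    have ratio : (2 * n + 7) * (2 * n + 3) ^ 2 * (4 * n + 5) ^ 2 * (4 * n + 7) ^ 2 ≤
        1024 * (n + 2) ^ 4 * (n + 1) ^ 2 * (2 * n + 5) := by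
      ring_nf; omega
    calc (2 * (n + 1) + 5) * (4 * (n + 1) + 4)! ^ 2
        = 64 * (n + 2) ^ 2 *
            ((2 * n + 7) * (2 * n + 3) ^ 2 * (4 * n + 5) ^ 2 * (4 * n + 7) ^ 2) *
            (4 * n + 4)! ^ 2 := by
          rw [show 4 * (n + 1) + 4 = 4 * n + 8 by ring, factorial_four_mul_add_eight]; ring
      _ ≤ 64 * (n + 2) ^ 2 * (1024 * (n + 2) ^ 4 * (n + 1) ^ 2 * (2 * n + 5)) *
            (4 * n + 4)! ^ 2 := by gcongr
      _ = 65536 * (n + 2) ^ 6 * (n + 1) ^ 2 * ((2 * n + 5) * (4 * n + 4)! ^ 2) := by ring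
      _ ≤ 65536 * (n + 2) ^ 6 * (n + 1) ^ 2 *
            (2880 * (2 ^ (16 * n) * (n + 1) ^ 6 * n ! ^ 8)) := by gcongr
      _ = 2880 * (2 ^ (16 * (n + 1)) * (n + 1 + 1) ^ 6 * (n + 1)! ^ 8) := by
          rw [Nat.factorial_succ]; ring

lemma mul_le_mul_of_mul_le_of_mul_le {a c p q W Z : ℝ} (ha : 0 < a) (hp : 0 ≤ p) (hZ : 0 ≤ Z)
    (hW : a * W ≤ c * Z) (hpq : p * c ≤ q * a) : p * W ≤ q * Z := by
  refine le_of_mul_le_mul_left ?_ ha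
  calc a * (p * W) = p * (a * W) := by ring
    _ ≤ p * (c * Z) := by gcongr
    _ = (p * c) * Z := by ring
    _ ≤ (q * a) * Z := by gcongr
    _ = a * (q * Z) := by ring

lemma div_le_div_mul_sqrt_of_sq_le {A B P s c : ℝ} (hA : 0 ≤ A) (hB : 0 < B) (hP : 0 < P)
    (hs : 0 < s) (h : (c * B) ^ 2 * s ≤ (A * P) ^ 2) : c / P ≤ A / (B * √s) := by
  rw [div_le_div_iff₀ hP (by positivity)]
  calc c * (B * √s) = (c * B) * √s := by ring
    _ ≤ |c * B| * √s := by gcongr; exact le_abs_self _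
    _ = √((c * B) ^ 2 * s) := by rw [Real.sqrt_mul (sq_nonneg _), Real.sqrt_sq_eq_abs]
    _ ≤ √((A * P) ^ 2) := Real.sqrt_le_sqrt h
    _ = A * P := Real.sqrt_sq (by positivity)

lemma paperZeta_nonneg (n : ℕ) : 0 ≤ paperZeta n := by
  unfold paperZeta; split_ifs <;> positivity

lemma paperXi_nonneg (k : ℕ) : 0 ≤ paperXi k := by
  unfold paperXi; split_ifs <;> positivity

lemma paperZeta_eq_sq {n m : ℕ} (h : n = 2 * m + 1) : paperZeta n = (m ! : ℝ) ^ 2 := by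
  subst h
  simp [paperZeta]

lemma paperZeta_eq_mul {n m : ℕ} (h : n = 2 * m + 2) :
    paperZeta n = ((m + 1)! : ℝ) * m ! := by
  subst h
  simp [paperZeta, Nat.even_add_one, show (2 * m + 2) / 2 = m + 1 by omega]

lemma paperXi_eq_sq {k m : ℕ} (h : k = 2 * m + 2) : paperXi k = (m ! : ℝ) ^ 2 / 4 := by
  subst h
  simp [paperXi, Nat.odd_add_one]

lemma paperXi_eq_mul {k m : ℕ} (h : k = 2 * m + 3) :
    paperXi k = ((m + 1)! : ℝ) * m ! / 4 := by
  subst h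
  simp [paperXi, Nat.odd_add_one]

theorem sq_bound_two_mul_add_two (n : ℕ) :
    (1.15 * ((4 * n + 4)! : ℝ)) ^ 2 * (8 * n + 9) ≤
      (((n + 1)! : ℝ) ^ 2 * ((n ! : ℝ) ^ 2 / 4) * (2 ^ (8 * n + 8) * (2 * n + 2))) ^ 2 := by
  calc (1.15 * ((4 * n + 4)! : ℝ)) ^ 2 * (8 * n + 9)
      = (1.3225 * (8 * n + 9)) * ((4 * n + 4)! : ℝ) ^ 2 := by ring
    _ ≤ 16384 * (2 ^ (16 * n) * (n + 1) ^ 6 * (n ! : ℝ) ^ 8) :=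
        mul_le_mul_of_mul_le_of_mul_le (a := 2 * n + 5) (c := 2880)
          (by positivity) (by positivity) (by positivity)
          (mod_cast factorial_four_mul_add_four_sq_le n) (by linarith)
    _ = _ := by rw [Nat.factorial_succ]; push_cast; ring

theorem sq_bound_two_mul_add_three (n : ℕ) :
    (1.15 * ((4 * n + 6)! : ℝ)) ^ 2 * (8 * n + 13) ≤
      (((n + 2)! : ℝ) * (n + 1)! * ((n + 1)! * n ! / 4) *
        (2 ^ (8 * n + 12) * (2 * n + 3))) ^ 2 := by
  calc (1.15 * ((4 * n + 6)! : ℝ)) ^ 2 * (8 * n + 13)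
      = (5.29 * (2 * n + 3) ^ 2 * (4 * n + 5) ^ 2 * (8 * n + 13)) * ((4 * n + 4)! : ℝ) ^ 2 := by
        simp only [Nat.factorial_succ]; push_cast; ring
    _ ≤ (1048576 * (n + 2) ^ 2 * (2 * n + 3) ^ 2) *
          (2 ^ (16 * n) * (n + 1) ^ 6 * (n ! : ℝ) ^ 8) :=
        mul_le_mul_of_mul_le_of_mul_le (a := 2 * n + 5) (c := 2880)
          (by positivity) (by positivity) (by positivity)
          (mod_cast factorial_four_mul_add_four_sq_le n)
          (by nlinarith [sq_nonneg (n : ℝ), sq_nonneg ((n : ℝ) * (2 * n + 3))])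
    _ = _ := by simp only [Nat.factorial_succ]; push_cast; ring

theorem stmt_3 (k : ℕ) (hk : 1 ≤ k) :
    paperZeta (k + 1) * paperXi k / ((Nat.factorial (2 * k) : ℝ) * Real.sqrt (4 * (k : ℝ) + 1)) ≥
      1.15 / (2 ^ (4 * k) * (k : ℝ)) := by
  have hk' : (0 : ℝ) < k := by exact_mod_cast hk
  refine div_le_div_mul_sqrt_of_sq_le (mul_nonneg (paperZeta_nonneg _) (paperXi_nonneg _))
    (by positivity) (by positivity) (by positivity) ?_
  obtain rfl | ⟨n, rfl | rfl⟩ : k = 1 ∨ ∃ n, k = 2 * n + 2 ∨ k = 2 * n + 3 := by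
    rcases eq_or_ne k 1 with h | h
    · exact .inl h
    · exact .inr ⟨(k - 2) / 2, by omega⟩
  · norm_num [paperZeta, paperXi]
  · rw [paperZeta_eq_sq (m := n + 1) (by ring), paperXi_eq_sq rfl]
    convert sq_bound_two_mul_add_two n using 2 <;> push_cast <;> ring_nf
  · rw [paperZeta_eq_mul (m := n + 1) (by ring), paperXi_eq_mul rfl]
    convert sq_bound_two_mul_add_three n using 2 <;> push_cast <;> ring_nf
end

section
/- Let V be the n×n Vandermonde matrix with (i,j)-entry d_j^(i-1) for pairwise distinct real nodes d_1, …, d_n. Then the operator ∞-norm of V⁻¹ satisfies ‖V⁻¹‖_∞ ≤ max over 1 ≤ i ≤ n of the product over p ≠ i of (1 + |d_p|)/|d_i − d_p|. -/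
open Matrix

attribute [local instance] Matrix.linftyOpNormedAddCommGroup

open Polynomial

lemma abs_coeff_sum {ι : Type*} [DecidableEq ι] (s : Finset ι) (d : ι → ℝ) :
    ∀ m : ℕ, ∑ k ∈ Finset.range m, |(∏ p ∈ s, (X - C (d p))).coeff k| ≤
      ∏ p ∈ s, (1 + |d p|) := by
  induction s using Finset.induction with
  | empty =>
    intro m
    simp only [Finset.prod_empty]
    cases m with
    | zero => simp
    | succ m =>
      calc ∑ k ∈ Finset.range (m+1), |(1 : ℝ[X]).coeff k|
          = ∑ k ∈ Finset.range (m+1), if k = 0 then 1 else 0 := by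
            refine Finset.sum_congr rfl fun k _ => ?_
            rcases eq_or_ne k 0 with rfl | hk
            · simp
            · simp [Polynomial.coeff_one, hk]
        _ ≤ 1 := by simp
  | @insert a s ha ih =>
    intro m
    have hprodnn : (0:ℝ) ≤ ∏ p ∈ s, (1 + |d p|) :=
      Finset.prod_nonneg fun p _ => by positivity
    rw [Finset.prod_insert ha, Finset.prod_insert ha, mul_comm (X - C (d a))]
    set Q : ℝ[X] := ∏ p ∈ s, (X - C (d p)) with hQ
    set r := d a
    cases m with
    | zero => simp; positivity
    | succ m =>
      rw [Finset.sum_range_succ']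
      have h0 : (Q * (X - C r)).coeff 0 = Q.coeff 0 * (-r) := by
        simp [mul_coeff_zero]
      have hS : ∑ k ∈ Finset.range m, |(Q * (X - C r)).coeff (k+1)| ≤
          ∑ k ∈ Finset.range m, (|Q.coeff k| + |r| * |Q.coeff (k+1)|) := by
        refine Finset.sum_le_sum fun k _ => ?_
        rw [coeff_mul_X_sub_C]
        calc |Q.coeff k - Q.coeff (k+1) * r| ≤ |Q.coeff k| + |Q.coeff (k+1) * r| :=
              abs_sub _ _
          _ = |Q.coeff k| + |r| * |Q.coeff (k+1)| := by rw [abs_mul]; ring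
      have key : ∑ k ∈ Finset.range m, |(Q * (X - C r)).coeff (k+1)| + |(Q * (X - C r)).coeff 0|
          ≤ ∑ k ∈ Finset.range m, |Q.coeff k|
            + |r| * ∑ k ∈ Finset.range (m+1), |Q.coeff k| := by
        rw [h0, abs_mul, abs_neg]
        calc ∑ k ∈ Finset.range m, |(Q * (X - C r)).coeff (k+1)| + |Q.coeff 0| * |r|
            ≤ (∑ k ∈ Finset.range m, (|Q.coeff k| + |r| * |Q.coeff (k+1)|)) + |Q.coeff 0| * |r| := by
              linarith [hS]
          _ = ∑ k ∈ Finset.range m, |Q.coeff k|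
              + |r| * (∑ k ∈ Finset.range m, |Q.coeff (k+1)| + |Q.coeff 0|) := by
              rw [Finset.sum_add_distrib, ← Finset.mul_sum]; ring
          _ = _ := by rw [← Finset.sum_range_succ' (fun k => |Q.coeff k|) m]
      have h1 : ∑ k ∈ Finset.range m, |Q.coeff k| ≤ ∑ k ∈ Finset.range (m+1), |Q.coeff k| := by
        rw [Finset.sum_range_succ]; exact le_add_of_nonneg_right (abs_nonneg _)
      have h2 := ih (m+1)
      calc ∑ k ∈ Finset.range m, |(Q * (X - C r)).coeff (k+1)| + |(Q * (X - C r)).coeff 0|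
          ≤ ∑ k ∈ Finset.range (m+1), |Q.coeff k|
            + |r| * ∑ k ∈ Finset.range (m+1), |Q.coeff k| := by linarith
        _ = (1 + |r|) * ∑ k ∈ Finset.range (m+1), |Q.coeff k| := by ring
        _ ≤ (1 + |r|) * ∏ p ∈ s, (1 + |d p|) := by
            have : (0:ℝ) ≤ 1 + |r| := by positivity
            exact mul_le_mul_of_nonneg_left h2 this


/-- Gautschi's bound: for the Vandermonde matrix `V i j = d j ^ i` with pairwise distinct
nodes, the ℓ∞ operator norm (maximum absolute row sum) of `V⁻¹` is bounded by
`max_i ∏_{p ≠ i} (1 + |d p|) / |d i - d p|`. -/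
theorem stmt_4 (n : ℕ) (hn : 0 < n) (d : Fin n → ℝ) (hd : Function.Injective d) :
    ‖(Matrix.of fun i j : Fin n => d j ^ (i : ℕ))⁻¹‖ ≤
      Finset.univ.sup' ⟨⟨0, hn⟩, Finset.mem_univ _⟩
        (fun i => ∏ p ∈ Finset.univ.erase i, (1 + |d p|) / |d i - d p|) := by
  classical
  set V : Matrix (Fin n) (Fin n) ℝ := Matrix.of fun i j : Fin n => d j ^ (i : ℕ) with hV
  set P : Fin n → ℝ[X] := fun i => ∏ p ∈ Finset.univ.erase i, (X - C (d p)) with hP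
  set c : Fin n → ℝ := fun i => (∏ p ∈ Finset.univ.erase i, (d i - d p))⁻¹ with hc
  set M : Matrix (Fin n) (Fin n) ℝ := Matrix.of fun i j : Fin n => c i * (P i).coeff j with hM
  have hc0 : ∀ i, (∏ p ∈ Finset.univ.erase i, (d i - d p)) ≠ 0 := by
    intro i
    refine Finset.prod_ne_zero_iff.2 fun p hp => ?_
    have hpi : p ≠ i := (Finset.mem_erase.1 hp).1
    exact sub_ne_zero.2 fun h => hpi (hd h).symm
  have hdeg : ∀ i, (P i).natDegree < n := by
    intro i
    have h1 : (P i).natDegree ≤ ∑ p ∈ Finset.univ.erase i, (X - C (d p)).natDegree :=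
      Polynomial.natDegree_prod_le _ _
    have h2 : ∑ p ∈ Finset.univ.erase i, (X - C (d p)).natDegree
        = (Finset.univ.erase i).card := by
      simp [Polynomial.natDegree_X_sub_C]
    have h3 : (Finset.univ.erase i).card < n := by
      have := Finset.card_erase_lt_of_mem (Finset.mem_univ i) (α := Fin n)
      simpa using this
    omega
  have heval : ∀ i x, (P i).eval x = ∏ p ∈ Finset.univ.erase i, (x - d p) := by
    intro i x; simp [hP, Polynomial.eval_prod]
  have hMV : M * V = 1 := by
    ext i j
    rw [Matrix.mul_apply]
    simp only [hM, hV, Matrix.of_apply]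
    have : ∑ k : Fin n, c i * (P i).coeff k * d j ^ (k : ℕ)
        = c i * ∑ k ∈ Finset.range n, (P i).coeff k * d j ^ k := by
      rw [Finset.mul_sum, ← Fin.sum_univ_eq_sum_range]
      exact Finset.sum_congr rfl fun k _ => by ring
    rw [this, ← Polynomial.eval_eq_sum_range' (hdeg i), heval]
    rcases eq_or_ne i j with rfl | hij
    · rw [Matrix.one_apply_eq, hc, inv_mul_cancel₀ (hc0 i)]
    · rw [Matrix.one_apply_ne hij]
      have hj : j ∈ Finset.univ.erase i := Finset.mem_erase.2 ⟨fun h => hij h.symm, Finset.mem_univ _⟩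
      rw [Finset.prod_eq_zero hj (by simp), mul_zero]
  have hinv : V⁻¹ = M := Matrix.inv_eq_left_inv hMV
  rw [hinv]
  set B := Finset.univ.sup' ⟨⟨0, hn⟩, Finset.mem_univ _⟩
      (fun i : Fin n => ∏ p ∈ Finset.univ.erase i, (1 + |d p|) / |d i - d p|) with hB
  have hrow : ∀ i : Fin n, ∑ j : Fin n, ‖M i j‖ ≤ B := by
    intro i
    have h1 : ∑ j : Fin n, ‖M i j‖ = |c i| * ∑ k ∈ Finset.range n, |(P i).coeff k| := by
      rw [Finset.mul_sum, ← Fin.sum_univ_eq_sum_range]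
      refine Finset.sum_congr rfl fun k _ => ?_
      simp [hM, Real.norm_eq_abs, abs_mul]
    have h2 : ∑ k ∈ Finset.range n, |(P i).coeff k| ≤ ∏ p ∈ Finset.univ.erase i, (1 + |d p|) :=
      abs_coeff_sum _ _ n
    have h3 : |c i| = ∏ p ∈ Finset.univ.erase i, |d i - d p|⁻¹ := by
      rw [hc, abs_inv, Finset.abs_prod, ← Finset.prod_inv_distrib]
    have h4 : |c i| * ∏ p ∈ Finset.univ.erase i, (1 + |d p|)
        = ∏ p ∈ Finset.univ.erase i, (1 + |d p|) / |d i - d p| := by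
      rw [h3, ← Finset.prod_mul_distrib]
      exact Finset.prod_congr rfl fun p _ => by rw [mul_comm, div_eq_mul_inv]
    calc ∑ j : Fin n, ‖M i j‖ = |c i| * ∑ k ∈ Finset.range n, |(P i).coeff k| := h1
      _ ≤ |c i| * ∏ p ∈ Finset.univ.erase i, (1 + |d p|) :=
          mul_le_mul_of_nonneg_left h2 (abs_nonneg _)
      _ = ∏ p ∈ Finset.univ.erase i, (1 + |d p|) / |d i - d p| := h4
      _ ≤ B := by rw [hB]; exact Finset.le_sup' (fun i : Fin n => ∏ p ∈ Finset.univ.erase i, (1 + |d p|) / |d i - d p|) (Finset.mem_univ i)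
  have hB0 : 0 ≤ B := by
    rw [hB]
    refine le_trans ?_ (Finset.le_sup' (fun i : Fin n => ∏ p ∈ Finset.univ.erase i, (1 + |d p|) / |d i - d p|) (Finset.mem_univ (⟨0, hn⟩ : Fin n)))
    exact Finset.prod_nonneg fun p _ => div_nonneg (by positivity) (abs_nonneg _)
  rw [Matrix.linfty_opNorm_def]
  calc ((Finset.univ.sup fun i : Fin n => ∑ j : Fin n, ‖M i j‖₊ : NNReal) : ℝ)
      ≤ ((B.toNNReal : NNReal) : ℝ) := by
        refine NNReal.coe_le_coe.2 (Finset.sup_le fun i _ => ?_)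
        rw [← NNReal.coe_le_coe, Real.coe_toNNReal _ hB0, NNReal.coe_sum]
        simpa [coe_nnnorm] using hrow i
    _ = B := Real.coe_toNNReal _ hB0
end

section
/- Let d_1 < d_2 < … < d_n be real numbers with |d_i| ≤ d for all i, and let d_min = min over i ≠ j of |d_i − d_j|. Then the inverse of the n×n Vandermonde matrix V with entries V(i,j) = d_j^(i-1) satisfies ‖V⁻¹‖_∞ ≤ (1+d)^(n-1) / (ζ(n) · d_min^(n-1)), where ζ(n) = (n/2)! · ((n-2)/2)! if n is even and ζ(n) = (((n-1)/2)!)^2 if n is odd. -/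
/-!
Row `j` of `V⁻¹` is the coefficient vector of the Lagrange basis polynomial
`ℓ_j = ∏_{k ≠ j} (X - d_k) / (d_j - d_k)`. Multiplying by one linear factor `X - r` scales the
`ℓ¹` norm of the coefficients by at most `1 + |r|`, so the numerator contributes at most
`(1 + d)^(n-1)`. Ordered nodes with gaps at least `d_min` satisfy `|d_j - d_k| ≥ |j - k| d_min`,
so the denominator is at least `j! (n-1-j)! d_min^(n-1)`, and `j! (n-1-j)!` is smallest at the
middle index, where it equals `ζ(n)`.
-/

open Matrix

attribute [local instance] Matrix.linftyOpNormedAddCommGroup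

open Polynomial Finset
open scoped Nat

theorem Matrix.linfty_opNorm_le_of_sum_le {m n α : Type*} [Fintype m] [Fintype n]
    [NormedAddCommGroup α] {A : Matrix m n α} {B : ℝ} (hB : 0 ≤ B)
    (h : ∀ i, ∑ j, ‖A i j‖ ≤ B) : ‖A‖ ≤ B := by
  rw [linfty_opNorm_def, ← NNReal.coe_mk B hB, NNReal.coe_le_coe]
  refine Finset.sup_le fun i _ => ?_
  rw [← NNReal.coe_le_coe]
  push_cast
  exact h i

theorem Matrix.inv_vandermonde_transpose {F : Type*} [Field F] {n : ℕ} {v : Fin n → F}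
    (hv : Function.Injective v) :
    (vandermonde v)ᵀ⁻¹ = of fun j i : Fin n => (Lagrange.basis univ v j).coeff i := by
  have hinj : Set.InjOn v (univ : Finset (Fin n)) := hv.injOn
  refine inv_eq_left_inv (ext fun j m => ?_)
  have hdeg : (Lagrange.basis univ v j).natDegree < n := by
    rw [Lagrange.natDegree_basis hinj (mem_univ j), card_fin]
    exact Nat.sub_one_lt_of_lt j.is_lt
  calc ((of fun j i : Fin n => (Lagrange.basis univ v j).coeff i) * (vandermonde v)ᵀ) j m
      = (Lagrange.basis univ v j).eval (v m) := by
        rw [eval_eq_sum_range' hdeg, ← Fin.sum_univ_eq_sum_range]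
        rfl
    _ = (1 : Matrix (Fin n) (Fin n) F) j m := by
        rcases eq_or_ne j m with rfl | hjm
        · rw [Lagrange.eval_basis_self hinj (mem_univ j), one_apply_eq]
        · rw [Lagrange.eval_basis_of_ne hjm (mem_univ m), one_apply_ne hjm]

section CoeffSum

variable (N : ℕ)

theorem sum_range_abs_coeff_one_le : ∑ i ∈ range N, |(1 : ℝ[X]).coeff i| ≤ 1 := by
  cases N with
  | zero => simp
  | succ N => simp [sum_range_succ', coeff_one]

theorem sum_range_abs_coeff_mul_X_le (p : ℝ[X]) :
    ∑ i ∈ range N, |(p * X).coeff i| ≤ ∑ i ∈ range N, |p.coeff i| := by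
  cases N with
  | zero => simp
  | succ N =>
    rw [sum_range_succ', sum_range_succ]
    simp only [coeff_mul_X, mul_coeff_zero, coeff_X_zero, mul_zero, abs_zero, add_zero]
    exact le_add_of_nonneg_right (abs_nonneg _)

theorem sum_range_abs_coeff_C_mul (a : ℝ) (p : ℝ[X]) :
    ∑ i ∈ range N, |(C a * p).coeff i| = |a| * ∑ i ∈ range N, |p.coeff i| := by
  simp only [coeff_C_mul, abs_mul, mul_sum]

theorem sum_range_abs_coeff_mul_X_sub_C_le (p : ℝ[X]) (r : ℝ) :
    ∑ i ∈ range N, |(p * (X - C r)).coeff i| ≤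
      (1 + |r|) * ∑ i ∈ range N, |p.coeff i| := by
  calc ∑ i ∈ range N, |(p * (X - C r)).coeff i|
      ≤ ∑ i ∈ range N, (|(p * X).coeff i| + |(C r * p).coeff i|) := by
        refine sum_le_sum fun i _ => ?_
        rw [mul_sub, mul_comm p (C r), coeff_sub]
        exact abs_sub _ _
    _ ≤ (1 + |r|) * ∑ i ∈ range N, |p.coeff i| := by
        rw [sum_add_distrib, sum_range_abs_coeff_C_mul, add_mul, one_mul]
        exact add_le_add_left (sum_range_abs_coeff_mul_X_le N p) _

theorem sum_range_abs_coeff_mul_basisDivisor_le (p : ℝ[X]) (x y : ℝ) :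
    ∑ i ∈ range N, |(p * Lagrange.basisDivisor x y).coeff i| ≤
      (1 + |y|) / |x - y| * ∑ i ∈ range N, |p.coeff i| := by
  rw [Lagrange.basisDivisor, mul_left_comm, sum_range_abs_coeff_C_mul, abs_inv, div_eq_inv_mul,
    mul_assoc]
  gcongr
  exact sum_range_abs_coeff_mul_X_sub_C_le N p y

theorem sum_range_abs_coeff_basis_le {ι : Type*} [DecidableEq ι] (s : Finset ι) (v : ι → ℝ)
    (j : ι) :
    ∑ i ∈ range N, |(Lagrange.basis s v j).coeff i| ≤
      ∏ k ∈ s.erase j, (1 + |v k|) / |v j - v k| := by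
  rw [Lagrange.basis]
  induction s.erase j using Finset.induction_on with
  | empty => simpa using sum_range_abs_coeff_one_le N
  | insert k t hk ih =>
    rw [prod_insert hk, prod_insert hk, mul_comm]
    exact (sum_range_abs_coeff_mul_basisDivisor_le N _ _ _).trans (by gcongr)

end CoeffSum

theorem Nat.factorial_half_mul_factorial_le {N a b : ℕ} (h : a + b = N) :
    (N / 2)! * (N - N / 2)! ≤ a ! * b ! := by
  obtain rfl : b = N - a := by omega
  have ha : a ≤ N := by omega
  refine Nat.le_of_mul_le_mul_left ?_ (Nat.choose_pos ha)
  calc N.choose a * ((N / 2)! * (N - N / 2)!)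
      ≤ N.choose (N / 2) * ((N / 2)! * (N - N / 2)!) :=
        Nat.mul_le_mul_right _ (Nat.choose_le_middle a N)
    _ = N.choose a * (a ! * (N - a)!) := by
        rw [← mul_assoc, ← mul_assoc, Nat.choose_mul_factorial_mul_factorial ha,
          Nat.choose_mul_factorial_mul_factorial (Nat.div_le_self N 2)]

theorem paperZeta_eq (n : ℕ) :
    paperZeta n = ((n - 1) / 2)! * ((n - 1) - (n - 1) / 2)! := by
  rw [paperZeta]
  split_ifs with h
  · obtain ⟨t, rfl⟩ := h
    rw [show (t + t) / 2 = t by omega, show (t + t - 2) / 2 = t - 1 by omega,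
      show (t + t - 1) / 2 = t - 1 by omega, show t + t - 1 - (t - 1) = t by omega, mul_comm]
  · obtain ⟨t, rfl⟩ := Nat.not_even_iff_odd.mp h
    rw [show 2 * t + 1 - 1 - (2 * t + 1 - 1) / 2 = (2 * t + 1 - 1) / 2 by omega, sq]

theorem paperZeta_pos (n : ℕ) : 0 < paperZeta n := by
  rw [paperZeta_eq]
  positivity

theorem paperZeta_le_factorial_mul_factorial {n j : ℕ} (hj : j < n) :
    paperZeta n ≤ j ! * (n - 1 - j)! := by
  rw [paperZeta_eq]
  exact_mod_cast Nat.factorial_half_mul_factorial_le (by omega)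

theorem Nat.prod_range_erase_dist {n j : ℕ} (hj : j < n) :
    ∏ k ∈ (range n).erase j, j.dist k = j ! * (n - 1 - j)! := by
  induction n, hj using Nat.le_induction with
  | base =>
    rw [range_add_one, erase_insert notMem_range_self, ← prod_range_reflect,
      ← prod_range_add_one_eq_factorial, show j + 1 - 1 - j = 0 by omega, Nat.factorial_zero,
      mul_one]
    refine prod_congr rfl fun k hk => ?_
    rw [Nat.dist_eq_sub_of_le_right (by omega)]
    grind
  | succ n hjn ih =>
    rw [range_add_one, erase_insert_of_ne (by omega), prod_insert (by simp), ih,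
      Nat.dist_eq_sub_of_le (by omega), show n + 1 - 1 - j = n - j by omega,
      show n - j = (n - 1 - j) + 1 by omega, Nat.factorial_succ]
    ring

theorem Fin.prod_univ_erase_dist {n : ℕ} (j : Fin n) :
    ∏ k ∈ univ.erase j, (j : ℕ).dist k = (j : ℕ)! * (n - 1 - j)! := by
  rw [← Nat.prod_range_erase_dist j.is_lt, ← Nat.Iio_eq_range, ← Fin.map_valEmbedding_univ,
    ← Fin.valEmbedding_apply, ← map_erase, prod_map]

section SeparatedNodes

variable {n : ℕ} {f : Fin n → ℝ} {δ : ℝ}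

theorem natCast_sub_mul_le_sub (h : ∀ i j, i < j → δ ≤ f j - f i) {i j : Fin n}
    (hij : i ≤ j) : ((j - i : ℕ) : ℝ) * δ ≤ f j - f i := by
  obtain ⟨m, hm⟩ : ∃ m, (j : ℕ) = i + m := ⟨j - i, by omega⟩
  induction m generalizing j with
  | zero =>
    obtain rfl : i = j := Fin.ext (by omega)
    simp
  | succ m ih =>
    let k : Fin n := ⟨i + m, by omega⟩
    have hik : ((k - i : ℕ) : ℝ) * δ ≤ f k - f i := ih (Fin.le_def.2 (by simp [k])) rfl
    have hkj : δ ≤ f j - f k := h k j (Fin.lt_def.2 (by simp [k]; omega))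
    simp only [k, add_tsub_cancel_left] at hik
    rw [hm, add_tsub_cancel_left, Nat.cast_succ]
    linarith

theorem natCast_dist_mul_le_abs_sub (h : ∀ i j, i < j → δ ≤ f j - f i) (i j : Fin n) :
    ((i : ℕ).dist j : ℝ) * δ ≤ |f i - f j| := by
  rcases le_total i j with hij | hji
  · rw [Nat.dist_eq_sub_of_le hij, abs_sub_comm]
    exact (natCast_sub_mul_le_sub h hij).trans (le_abs_self _)
  · rw [Nat.dist_comm, Nat.dist_eq_sub_of_le hji]
    exact (natCast_sub_mul_le_sub h hji).trans (le_abs_self _)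

theorem paperZeta_mul_pow_le_prod_abs_sub (hδ : 0 ≤ δ)
    (h : ∀ i j, i < j → δ ≤ f j - f i) (j : Fin n) :
    paperZeta n * δ ^ (n - 1) ≤ ∏ k ∈ univ.erase j, |f j - f k| := by
  calc paperZeta n * δ ^ (n - 1) ≤ ((j : ℕ)! * (n - 1 - j)! : ℕ) * δ ^ (n - 1) := by
        gcongr
        exact_mod_cast paperZeta_le_factorial_mul_factorial j.is_lt
    _ = ∏ k ∈ univ.erase j, ((j : ℕ).dist k * δ) := by
        rw [prod_mul_distrib, prod_const, card_erase_of_mem (mem_univ j), card_fin,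
          ← Fin.prod_univ_erase_dist, Nat.cast_prod]
    _ ≤ ∏ k ∈ univ.erase j, |f j - f k| :=
        prod_le_prod (fun k _ => by positivity) fun k _ => natCast_dist_mul_le_abs_sub h j k

end SeparatedNodes

theorem stmt_5_general (n : ℕ) (dd : Fin n → ℝ) (hmono : StrictMono dd) (d : ℝ)
    (hbound : ∀ i, |dd i| ≤ d) (dmin : ℝ)
    (hdmin : IsLeast {x : ℝ | ∃ i j : Fin n, i ≠ j ∧ x = |dd i - dd j|} dmin) :
    ‖(Matrix.of fun i j : Fin n => dd j ^ (i : ℕ))⁻¹‖ ≤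
      (1 + d) ^ (n - 1) / (paperZeta n * dmin ^ (n - 1)) := by
  obtain ⟨i₀, j₀, hij₀, hdmin_eq⟩ := hdmin.1
  have hdmin_pos : 0 < dmin :=
    hdmin_eq ▸ abs_pos.2 (sub_ne_zero.2 (hmono.injective.ne hij₀))
  have hgap : ∀ i j, i < j → dmin ≤ dd j - dd i := fun i j hij =>
    (hdmin.2 ⟨j, i, hij.ne', rfl⟩).trans_eq (abs_of_pos (sub_pos.2 (hmono hij)))
  have hd : 0 ≤ d := (abs_nonneg _).trans (hbound i₀)
  have hden : 0 < paperZeta n * dmin ^ (n - 1) := by have := paperZeta_pos n; positivity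
  show ‖(vandermonde dd)ᵀ⁻¹‖ ≤ _
  rw [inv_vandermonde_transpose hmono.injective]
  refine linfty_opNorm_le_of_sum_le (by positivity) fun j => ?_
  calc ∑ i : Fin n, ‖(Lagrange.basis univ dd j).coeff i‖
      = ∑ i ∈ range n, |(Lagrange.basis univ dd j).coeff i| :=
        Fin.sum_univ_eq_sum_range (fun i => |(Lagrange.basis univ dd j).coeff i|) n
    _ ≤ ∏ k ∈ univ.erase j, (1 + |dd k|) / |dd j - dd k| :=
        sum_range_abs_coeff_basis_le n _ _ j
    _ = (∏ k ∈ univ.erase j, (1 + |dd k|)) / ∏ k ∈ univ.erase j, |dd j - dd k| :=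
        prod_div_distrib _ _
    _ ≤ (1 + d) ^ (n - 1) / (paperZeta n * dmin ^ (n - 1)) := by
        refine div_le_div₀ (by positivity) ?_ hden
          (paperZeta_mul_pow_le_prod_abs_sub hdmin_pos.le hgap j)
        calc ∏ k ∈ univ.erase j, (1 + |dd k|) ≤ ∏ _k ∈ univ.erase j, (1 + d) :=
              prod_le_prod (fun k _ => by positivity) fun k _ => by linarith [hbound k]
          _ = (1 + d) ^ (n - 1) := by rw [prod_const, card_erase_of_mem (mem_univ j), card_fin]

/-- For ordered nodes `d_1 < ... < d_n` in `[-d, d]` with minimal gap `dmin`, the ℓ∞ operator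
norm of the inverse Vandermonde matrix is at most `(1+d)^(n-1) / (ζ(n) · dmin^(n-1))`. -/
theorem stmt_5 (n : ℕ) (hn : 0 < n) (dd : Fin n → ℝ) (hmono : StrictMono dd) (d : ℝ)
    (hbound : ∀ i, |dd i| ≤ d) (dmin : ℝ)
    (hdmin : IsLeast {x : ℝ | ∃ i j : Fin n, i ≠ j ∧ x = |dd i - dd j|} dmin) :
    ‖(Matrix.of fun i j : Fin n => dd j ^ (i : ℕ))⁻¹‖ ≤
      (1 + d) ^ (n - 1) / (paperZeta n * dmin ^ (n - 1)) :=
  stmt_5_general n dd hmono d hbound dmin hdmin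
end

section
/- Let V be the n×n Vandermonde matrix with entries d_j^(i-1) for pairwise distinct real nodes d_1, …, d_n, and let W be the (S+1)×n matrix with entries d_j^(i-1), i = 1, …, S+1, where S > n−1. Then the minimum singular value of W satisfies σ_min(W) ≥ σ_min(V) ≥ (1/√n) · min over 1 ≤ i ≤ n of the product over p ≠ i of |d_i − d_p|/(1 + |d_p|). -/
open Matrix

/-- The minimum singular value of a real matrix: the infimum of `‖A x‖₂` over Euclidean
unit vectors `x`. -/
noncomputable def sMin {m n : ℕ} (A : Matrix (Fin m) (Fin n) ℝ) : ℝ :=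
  sInf {r : ℝ | ∃ x : Fin n → ℝ, (∑ j, (x j) ^ 2) = 1 ∧
    r = Real.sqrt (∑ i, (A.mulVec x i) ^ 2)}

/-!
Deleting rows can only shrink `‖A x‖₂`, which gives `σ_min(V) ≤ σ_min(W)`.

For the lower bound (Gautschi), the rows of `V⁻¹` are the coefficient vectors of the Lagrange
basis polynomials `ℓ_j = ∏_{p ≠ j} (X - d_p) / (d_j - d_p)`. Expanding the product one factor at a
time bounds the ℓ¹-norm of the coefficients of `ℓ_j` by `∏_{p ≠ j} (1 + |d_p|) / |d_j - d_p|`.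
Hence `|x_j| · ∏_{p ≠ j} |d_j - d_p| / (1 + |d_p|) ≤ ‖V x‖_∞ ≤ ‖V x‖₂`, and summing the squares
over the `n` coordinates of a unit vector `x` costs the factor `√n`.
-/

open Polynomial Finset

section CoeffNorm

variable {K : Type*} [NormedField K]

theorem sum_norm_coeff_X_mul_le (P : K[X]) (N : ℕ) :
    ∑ i ∈ range N, ‖(X * P).coeff i‖ ≤ ∑ i ∈ range N, ‖P.coeff i‖ := by
  cases N with
  | zero => simp
  | succ N =>
    rw [sum_range_succ', coeff_X_mul_zero, norm_zero, add_zero]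
    simp only [coeff_X_mul]
    exact sum_le_sum_of_subset_of_nonneg (range_subset_range.mpr N.le_succ)
      fun _ _ _ => norm_nonneg _

theorem sum_norm_coeff_X_sub_C_mul_le (a : K) (P : K[X]) (N : ℕ) :
    ∑ i ∈ range N, ‖((X - C a) * P).coeff i‖ ≤ (1 + ‖a‖) * ∑ i ∈ range N, ‖P.coeff i‖ := by
  calc ∑ i ∈ range N, ‖((X - C a) * P).coeff i‖
      ≤ ∑ i ∈ range N, (‖(X * P).coeff i‖ + ‖a‖ * ‖P.coeff i‖) := by
        refine sum_le_sum fun i _ => ?_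
        rw [sub_mul, coeff_sub, coeff_C_mul, ← norm_mul]
        exact norm_sub_le _ _
    _ ≤ ∑ i ∈ range N, ‖P.coeff i‖ + ‖a‖ * ∑ i ∈ range N, ‖P.coeff i‖ := by
        rw [sum_add_distrib, mul_sum]
        exact add_le_add (sum_norm_coeff_X_mul_le P N) le_rfl
    _ = (1 + ‖a‖) * ∑ i ∈ range N, ‖P.coeff i‖ := by ring

theorem sum_norm_coeff_prod_X_sub_C_le {ι : Type*} (s : Finset ι) (v : ι → K) (N : ℕ) :
    ∑ i ∈ range N, ‖(∏ j ∈ s, (X - C (v j))).coeff i‖ ≤ ∏ j ∈ s, (1 + ‖v j‖) := by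
  induction s using Finset.cons_induction with
  | empty =>
    simp only [prod_empty, coeff_one, apply_ite norm, norm_one, norm_zero, sum_ite_eq']
    split_ifs <;> norm_num
  | cons a s _ ih =>
    rw [prod_cons, prod_cons]
    exact (sum_norm_coeff_X_sub_C_mul_le _ _ N).trans (by gcongr)

theorem sum_norm_coeff_basis_le {ι : Type*} [DecidableEq ι] (s : Finset ι) (v : ι → K)
    (i : ι) (N : ℕ) :
    ∑ k ∈ range N, ‖(Lagrange.basis s v i).coeff k‖ ≤
      (∏ j ∈ s.erase i, ‖v i - v j‖ / (1 + ‖v j‖))⁻¹ := by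
  have hbasis : Lagrange.basis s v i =
      C (∏ j ∈ s.erase i, (v i - v j)⁻¹) * ∏ j ∈ s.erase i, (X - C (v j)) := by
    simp only [Lagrange.basis, Lagrange.basisDivisor, prod_mul_distrib, map_prod]
  simp only [hbasis, coeff_C_mul, norm_mul, ← mul_sum, norm_prod, norm_inv, div_eq_mul_inv,
    prod_mul_distrib, prod_inv_distrib, mul_inv, inv_inv]
  gcongr
  exact sum_norm_coeff_prod_X_sub_C_le _ _ N

end CoeffNorm

theorem sum_basis_coeff_mul_mulVec_vandermonde {K : Type*} [Field K] {n : ℕ} {d : Fin n → K}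
    (hd : Function.Injective d) (x : Fin n → K) (j : Fin n) :
    ∑ i : Fin n, (Lagrange.basis univ d j).coeff i * ((vandermonde d)ᵀ *ᵥ x) i = x j := by
  have hdeg : (Lagrange.basis univ d j).natDegree < n := by
    rw [Lagrange.natDegree_basis hd.injOn (mem_univ j), card_univ, Fintype.card_fin]
    exact Nat.sub_one_lt_of_lt j.pos
  have heval (k : Fin n) :
      ∑ i : Fin n, (Lagrange.basis univ d j).coeff i * d k ^ (i : ℕ) =
        (Pi.single j (1 : K) : Fin n → K) k := by
    rw [Fin.sum_univ_eq_sum_range (fun i => (Lagrange.basis univ d j).coeff i * d k ^ i),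
      ← eval_eq_sum_range' hdeg]
    by_cases hkj : k = j
    · subst hkj
      simpa using Lagrange.eval_basis_self hd.injOn (mem_univ k)
    · simpa [hkj] using Lagrange.eval_basis_of_ne (Ne.symm hkj) (mem_univ k)
  simp only [mulVec_transpose, vecMul, dotProduct, vandermonde_apply, mul_sum]
  rw [sum_comm]
  simp_rw [mul_left_comm _ (x _), ← mul_sum, heval]
  simp [Pi.single_apply]

theorem abs_sum_mul_le_sum_abs_mul_sqrt {ι : Type*} [Fintype ι] (c y : ι → ℝ) :
    |∑ i, c i * y i| ≤ (∑ i, |c i|) * √(∑ i, y i ^ 2) := by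
  calc |∑ i, c i * y i| ≤ ∑ i, |c i| * |y i| := by
        simpa only [abs_mul] using abs_sum_le_sum_abs (fun i => c i * y i) univ
    _ ≤ ∑ i, |c i| * √(∑ i, y i ^ 2) := by
        gcongr with i
        exact Real.abs_le_sqrt (single_le_sum (fun k _ => sq_nonneg (y k)) (mem_univ i))
    _ = (∑ i, |c i|) * √(∑ i, y i ^ 2) := (sum_mul _ _ _).symm

theorem le_sqrt_card_mul_of_forall_mul_abs_le {ι : Type*} [Fintype ι] {x : ι → ℝ}
    (hx : ∑ i, x i ^ 2 = 1) {m r : ℝ} (hr : 0 ≤ r) (h : ∀ i, m * |x i| ≤ r) :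
    m ≤ √(Fintype.card ι) * r := by
  rcases le_or_gt m 0 with hm | hm
  · exact hm.trans (by positivity)
  rw [← Real.sqrt_sq hr, ← Real.sqrt_mul (Nat.cast_nonneg _), Real.le_sqrt hm.le (by positivity)]
  calc m ^ 2 = ∑ i, (m * |x i|) ^ 2 := by simp_rw [mul_pow, sq_abs, ← mul_sum, hx, mul_one]
    _ ≤ ∑ _i : ι, r ^ 2 := by
        gcongr with i
        exact h i
    _ = Fintype.card ι * r ^ 2 := by simp

theorem prod_abs_sub_div_mul_abs_le {n : ℕ} {d : Fin n → ℝ} (hd : Function.Injective d)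
    (x : Fin n → ℝ) (j : Fin n) :
    (∏ p ∈ univ.erase j, |d j - d p| / (1 + |d p|)) * |x j| ≤
      √(∑ i : Fin n, ((vandermonde d)ᵀ *ᵥ x) i ^ 2) := by
  set f := ∏ p ∈ univ.erase j, |d j - d p| / (1 + |d p|)
  have hcoeff : ∑ i : Fin n, |(Lagrange.basis univ d j).coeff i| ≤ f⁻¹ := by
    rw [Fin.sum_univ_eq_sum_range (fun i => |(Lagrange.basis univ d j).coeff i|)]
    simpa only [Real.norm_eq_abs] using sum_norm_coeff_basis_le univ d j n
  rw [← sum_basis_coeff_mul_mulVec_vandermonde hd x j]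
  calc f * |∑ i : Fin n, (Lagrange.basis univ d j).coeff i * ((vandermonde d)ᵀ *ᵥ x) i|
      ≤ f * (f⁻¹ * √(∑ i : Fin n, ((vandermonde d)ᵀ *ᵥ x) i ^ 2)) := by
        gcongr
        exact (abs_sum_mul_le_sum_abs_mul_sqrt _ _).trans (by gcongr)
    _ ≤ √(∑ i : Fin n, ((vandermonde d)ᵀ *ᵥ x) i ^ 2) := by
        rw [← mul_assoc]
        exact mul_le_of_le_one_left (Real.sqrt_nonneg _) mul_inv_le_one

section SMin

variable {m k n : ℕ}

theorem sMin_le (A : Matrix (Fin m) (Fin n) ℝ) {x : Fin n → ℝ} (hx : ∑ j, x j ^ 2 = 1) :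
    sMin A ≤ √(∑ i, (A *ᵥ x) i ^ 2) :=
  csInf_le ⟨0, by rintro r ⟨y, -, rfl⟩; positivity⟩ ⟨x, hx, rfl⟩

theorem le_sMin (hn : 0 < n) {A : Matrix (Fin m) (Fin n) ℝ} {c : ℝ}
    (h : ∀ x : Fin n → ℝ, ∑ j, x j ^ 2 = 1 → c ≤ √(∑ i, (A *ᵥ x) i ^ 2)) : c ≤ sMin A := by
  refine le_csInf ⟨_, Pi.single ⟨0, hn⟩ 1, by simp [Pi.single_apply], rfl⟩ ?_
  rintro r ⟨x, hx, rfl⟩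
  exact h x hx

theorem sMin_le_sMin (hn : 0 < n) {A : Matrix (Fin m) (Fin n) ℝ} {B : Matrix (Fin k) (Fin n) ℝ}
    (h : ∀ x, ∑ i, (A *ᵥ x) i ^ 2 ≤ ∑ i, (B *ᵥ x) i ^ 2) : sMin A ≤ sMin B :=
  le_sMin hn fun x hx => (sMin_le A hx).trans (Real.sqrt_le_sqrt (h x))

end SMin

theorem sum_sq_mulVec_pow_le {m k n : ℕ} (hmk : m ≤ k) (d x : Fin n → ℝ) :
    ∑ i : Fin m, ((of fun (i : Fin m) (j : Fin n) => d j ^ (i : ℕ)) *ᵥ x) i ^ 2 ≤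
      ∑ i : Fin k, ((of fun (i : Fin k) (j : Fin n) => d j ^ (i : ℕ)) *ᵥ x) i ^ 2 := by
  change ∑ i : Fin m, (∑ j, d j ^ (i : ℕ) * x j) ^ 2 ≤ ∑ i : Fin k, (∑ j, d j ^ (i : ℕ) * x j) ^ 2
  rw [Fin.sum_univ_eq_sum_range (fun i => (∑ j, d j ^ i * x j) ^ 2),
    Fin.sum_univ_eq_sum_range (fun i => (∑ j, d j ^ i * x j) ^ 2)]
  exact sum_le_sum_of_subset_of_nonneg (range_subset_range.mpr hmk) fun _ _ _ => sq_nonneg _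

/-- For the square Vandermonde matrix `V` and its rectangular extension `W` (powers up to `S`,
`S > n - 1`) with pairwise distinct nodes, one has
`σ_min(W) ≥ σ_min(V) ≥ (1/√n)·min_i ∏_{p ≠ i} |d i - d p| / (1 + |d p|)`. -/
theorem stmt_6 (n S : ℕ) (hn : 0 < n) (hS : n - 1 < S) (d : Fin n → ℝ)
    (hd : Function.Injective d) :
    sMin (Matrix.of fun i j : Fin n => d j ^ (i : ℕ)) ≤
        sMin (Matrix.of fun (i : Fin (S + 1)) (j : Fin n) => d j ^ (i : ℕ)) ∧
      (1 / Real.sqrt n) * Finset.univ.inf' ⟨⟨0, hn⟩, Finset.mem_univ _⟩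
          (fun i => ∏ p ∈ Finset.univ.erase i, |d i - d p| / (1 + |d p|)) ≤
        sMin (Matrix.of fun i j : Fin n => d j ^ (i : ℕ)) := by
  refine ⟨sMin_le_sMin hn fun x => sum_sq_mulVec_pow_le (by omega) d x, le_sMin hn fun x hx => ?_⟩
  -- Mathlib's `vandermonde d` has entries `d i ^ j`, the transpose of the matrix here.
  have hV : (of fun i j : Fin n => d j ^ (i : ℕ)) = (vandermonde d)ᵀ := rfl
  rw [hV, one_div_mul_eq_div, div_le_iff₀ (by positivity), mul_comm]
  refine (le_sqrt_card_mul_of_forall_mul_abs_le hx (Real.sqrt_nonneg _) fun j => ?_).trans_eq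
    (by rw [Fintype.card_fin])
  exact (mul_le_mul_of_nonneg_right (inf'_le _ (mem_univ j)) (abs_nonneg _)).trans
    (prod_abs_sub_div_mul_abs_le hd x j)
end

section
/- Let d_1, …, d_n be pairwise distinct real numbers with |d_j| < d for all j. With V_n(n) the (n+1)×n matrix of powers d_j^(i-1), i = 1,…,n+1, and V_n(n−1) the square Vandermonde matrix of powers i = 1,…,n, one has √(det(V_n(n)ᵀ V_n(n)) / det(V_n(n−1)ᵀ V_n(n−1))) ≤ (1 + d)^n. -/
/-!
Write `V = V_n(n)` and `W = V_n(n-1)`: `V` is `W` with the extra row `u = (d_j ^ n)_j`, so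
`VᵀV = WᵀW + u uᵀ`. Since each `d_j` is a root of the monic nodal polynomial
`p = ∏ (X - d_j) = X ^ n + ∑_{i<n} c_i X ^ i`, we have `u = Wᵀ x` with `x = -c`, hence
`VᵀV = Wᵀ (1 + x xᵀ) W` and the matrix determinant lemma turns the ratio into
`1 + |x|² = ∑_{i ≤ n} c_i²`. Its square root is at most `∑ |c_i|`, and Vieta's formulas bound
`|c_i| ≤ C(n, i) d ^ (n - i)`, which sums to `(1 + d) ^ n`.
-/

open Matrix

/-- The rectangular Vandermonde matrix `V_n(n)` with rows of powers `0,…,n`. -/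
noncomputable def vandRect (n : ℕ) (d : Fin n → ℝ) : Matrix (Fin (n + 1)) (Fin n) ℝ :=
  Matrix.of fun i j => d j ^ (i : ℕ)

/-- The square Vandermonde matrix `V_n(n-1)` with rows of powers `0,…,n-1`. -/
noncomputable def vandSq (n : ℕ) (d : Fin n → ℝ) : Matrix (Fin n) (Fin n) ℝ :=
  Matrix.of fun i j => d j ^ (i : ℕ)

open Polynomial Finset Lagrange

theorem Matrix.det_transpose_mul_add_vecMulVec {m R : Type*} [Fintype m] [DecidableEq m]
    [CommRing R] (A : Matrix m m R) (x : m → R) :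
    (Aᵀ * A + vecMulVec (Aᵀ *ᵥ x) (Aᵀ *ᵥ x)).det = A.det ^ 2 * (1 + x ⬝ᵥ x) := by
  have hfactor : Aᵀ * A + vecMulVec (Aᵀ *ᵥ x) (Aᵀ *ᵥ x) = Aᵀ * ((1 + vecMulVec x x) * A) := by
    rw [Matrix.add_mul, Matrix.one_mul, Matrix.mul_add, vecMulVec_mul, mul_vecMulVec,
      mulVec_transpose]
  rw [hfactor, det_mul, det_mul, det_transpose, vecMulVec_eq Unit,
    det_one_add_replicateCol_mul_replicateRow]
  ring

section OrderedRing

variable {ι R : Type*} [CommRing R] [LinearOrder R] [IsStrictOrderedRing R]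

theorem Finset.abs_esymm_map_val_le (s : Finset ι) (f : ι → R) {d : R}
    (hf : ∀ i ∈ s, |f i| ≤ d) (k : ℕ) :
    |(s.val.map f).esymm k| ≤ (#s).choose k * d ^ k := by
  rw [esymm_map_val]
  calc |∑ t ∈ s.powersetCard k, ∏ i ∈ t, f i|
      ≤ ∑ t ∈ s.powersetCard k, |∏ i ∈ t, f i| := abs_sum_le_sum_abs _ _
    _ ≤ ∑ t ∈ s.powersetCard k, d ^ k := by
        refine sum_le_sum fun t ht => ?_
        obtain ⟨hts, htk⟩ := mem_powersetCard.mp ht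
        rw [abs_prod, ← htk, ← prod_const]
        exact prod_le_prod (fun i _ => abs_nonneg _) fun i hi => hf i (hts hi)
    _ = (#s).choose k * d ^ k := by
        rw [sum_const, card_powersetCard, nsmul_eq_mul]

theorem Lagrange.abs_coeff_nodal_le (s : Finset ι) (v : ι → R) {d : R}
    (hv : ∀ i ∈ s, |v i| ≤ d) {k : ℕ} (hk : k ≤ #s) :
    |(nodal s v).coeff k| ≤ (#s).choose k * d ^ (#s - k) := by
  have hnodal : nodal s v = ((s.val.map v).map fun a => X - C a).prod := by
    rw [nodal_eq, Multiset.map_map]; rfl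
  have hcard : Multiset.card (s.val.map v) = #s := Multiset.card_map _ _
  rw [hnodal, Multiset.prod_X_sub_C_coeff _ (hcard ▸ hk), hcard, abs_mul, abs_pow, abs_neg,
    abs_one, one_pow, one_mul, ← Nat.choose_symm hk]
  exact abs_esymm_map_val_le s v hv _

theorem Lagrange.sum_abs_coeff_nodal_le (s : Finset ι) (v : ι → R) {d : R}
    (hv : ∀ i ∈ s, |v i| ≤ d) :
    ∑ k ∈ range (#s + 1), |(nodal s v).coeff k| ≤ (1 + d) ^ #s := by
  rw [add_pow]
  refine sum_le_sum fun k hk => ?_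
  rw [one_pow, one_mul, mul_comm]
  exact abs_coeff_nodal_le s v hv (Nat.lt_succ_iff.mp (mem_range.mp hk))

end OrderedRing

theorem Real.sqrt_sum_sq_le_sum_abs {ι : Type*} (s : Finset ι) (f : ι → ℝ) :
    √(∑ i ∈ s, f i ^ 2) ≤ ∑ i ∈ s, |f i| := by
  rw [Real.sqrt_le_left (sum_nonneg fun i _ => abs_nonneg _)]
  simpa only [sq_abs] using sum_sq_le_sq_sum_of_nonneg (s := s) fun i _ => abs_nonneg (f i)

section Vandermonde

variable {n : ℕ} (d : Fin n → ℝ)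

theorem vandSq_eq_transpose_vandermonde : vandSq n d = (vandermonde d)ᵀ := rfl

theorem vandRect_gram :
    (vandRect n d)ᵀ * vandRect n d =
      (vandSq n d)ᵀ * vandSq n d + vecMulVec (fun j => d j ^ n) (fun j => d j ^ n) := by
  ext j k
  simp [mul_apply, Fin.sum_univ_castSucc, vandRect, vandSq, vecMulVec_apply]

theorem vandSq_transpose_mulVec_neg_coeff_nodal :
    (vandSq n d)ᵀ *ᵥ (fun i => -(nodal univ d).coeff i) = fun j => d j ^ n := by
  ext j
  have hroot := eval_nodal_at_node (s := univ) (v := d) (mem_univ j)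
  rw [(nodal_monic (s := univ) (v := d)).as_sum, natDegree_nodal, card_univ, Fintype.card_fin]
    at hroot
  simp only [eval_add, eval_pow, eval_X, eval_finsetSum, eval_mul, eval_C] at hroot
  simp only [mulVec, dotProduct, transpose_apply, vandSq, of_apply, mul_neg, sum_neg_distrib]
  rw [Fin.sum_univ_eq_sum_range (fun i => d j ^ i * (nodal univ d).coeff i)]
  simp only [mul_comm (d j ^ _)]
  linarith

theorem vandRect_gram_det_div {d : Fin n → ℝ} (hd : Function.Injective d) :
    ((vandRect n d)ᵀ * vandRect n d).det / ((vandSq n d)ᵀ * vandSq n d).det =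
      ∑ i ∈ range (n + 1), (nodal univ d).coeff i ^ 2 := by
  have hW : (vandSq n d).det ≠ 0 := by
    rw [vandSq_eq_transpose_vandermonde, det_transpose]
    exact det_vandermonde_ne_zero_iff.mpr hd
  rw [vandRect_gram, ← vandSq_transpose_mulVec_neg_coeff_nodal, det_transpose_mul_add_vecMulVec,
    det_mul, det_transpose, ← sq, mul_div_cancel_left₀ _ (pow_ne_zero 2 hW), sum_range_succ]
  have hlead : (nodal univ d).coeff n = 1 := by
    simpa using (nodal_monic (s := univ) (v := d)).coeff_natDegree
  simp only [dotProduct, ← sq, neg_sq, hlead, one_pow]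
  rw [Fin.sum_univ_eq_sum_range (fun i => (nodal univ d).coeff i ^ 2), add_comm]

end Vandermonde

theorem stmt_8_general (n : ℕ) (dd : Fin n → ℝ) (hd : Function.Injective dd) (d : ℝ)
    (hbound : ∀ j, |dd j| < d) :
    Real.sqrt (((vandRect n dd)ᵀ * vandRect n dd).det / ((vandSq n dd)ᵀ * vandSq n dd).det) ≤
      (1 + d) ^ n := by
  rw [vandRect_gram_det_div hd]
  calc _ ≤ ∑ i ∈ range (n + 1), |(nodal univ dd).coeff i| := Real.sqrt_sum_sq_le_sum_abs _ _
    _ ≤ (1 + d) ^ n := by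
        simpa using sum_abs_coeff_nodal_le univ dd fun j _ => (hbound j).le

/-- If `|d_j| < d` for all `j`, the ratio of Gram determinants of `V_n(n)` and `V_n(n-1)`
is at most `(1+d)^n`. -/
theorem stmt_8 (n : ℕ) (hn : 0 < n) (dd : Fin n → ℝ) (hd : Function.Injective dd) (d : ℝ)
    (hbound : ∀ j, |dd j| < d) :
    Real.sqrt (((vandRect n dd)ᵀ * vandRect n dd).det / ((vandSq n dd)ᵀ * vandSq n dd).det) ≤
      (1 + d) ^ n :=
  stmt_8_general n dd hd d hbound
end

section
/- Let k ≥ 1 and let d_1* < d_2* < … < d_{k+1}* be real numbers with minimal gap d_min* = min over i ≠ j of |d_i* − d_j*|. Then for any real numbers d_1 ≤ d_2 ≤ … ≤ d_k, the vector η ∈ ℝ^(k+1) with components η_j = Π_{q=1}^{k} (d_j* − d_q) satisfies ‖η‖_∞ ≥ ξ(k) · (d_min*)^k, where ξ(1) = 1/2, ξ(k) = ((k-1)/2)! · ((k-3)/2)! / 4 for odd k ≥ 3, and ξ(k) = (((k-2)/2)!)^2 / 4 for even k. -/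
open Real

lemma natA (m : ℕ) : 4^m * (m.factorial)^2 ≤ (2*m+2).factorial := by
  induction m with
  | zero => simp [Nat.factorial]
  | succ n ih =>
    have h1 : 4^(n+1) * ((n+1).factorial)^2 = (2*n+2)*(2*n+2) * (4^n * (n.factorial)^2) := by
      simp [Nat.factorial_succ]; ring
    have h2 : (2*(n+1)+2).factorial = (2*n+4)*((2*n+3)*(2*n+2).factorial) := by
      have : 2*(n+1)+2 = (2*n+3)+1 := by ring
      rw [this, Nat.factorial_succ, Nat.factorial_succ]
      try ring_nf
    rw [h1, h2]
    calc (2*n+2)*(2*n+2) * (4^n * (n.factorial)^2) ≤ (2*n+4)*(2*n+3) * (4^n * (n.factorial)^2) := by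
          exact Nat.mul_le_mul_right _ (by nlinarith)
      _ ≤ (2*n+4)*(2*n+3) * (2*n+2).factorial := by
          exact Nat.mul_le_mul_left _ ih
      _ = (2*n+4)*((2*n+3)*(2*n+2).factorial) := by ring

lemma natB (m : ℕ) : 4^(m+1) * (m+1).factorial * m.factorial ≤ 2 * (2*m+3).factorial := by
  induction m with
  | zero => simp [Nat.factorial]
  | succ n ih =>
    have h1 : 4^(n+2) * ((n+2).factorial) * (n+1).factorial
        = 4*((n+2)*(n+1)) * (4^(n+1) * (n+1).factorial * n.factorial) := by
      simp [Nat.factorial_succ]; ring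
    have h2 : 2*(2*(n+1)+3).factorial = (2*n+5)*((2*n+4)*(2*(2*n+3).factorial)) := by
      have : 2*(n+1)+3 = ((2*n+3)+1)+1 := by ring
      rw [this, Nat.factorial_succ, Nat.factorial_succ]
      try ring_nf
    rw [h1, h2]
    calc 4*((n+2)*(n+1)) * (4^(n+1) * (n+1).factorial * n.factorial)
        ≤ (2*n+5)*(2*n+4) * (4^(n+1) * (n+1).factorial * n.factorial) := by
          exact Nat.mul_le_mul_right _ (by nlinarith)
      _ ≤ (2*n+5)*(2*n+4) * (2*(2*n+3).factorial) := by
          exact Nat.mul_le_mul_left _ ih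
      _ = (2*n+5)*((2*n+4)*(2*(2*n+3).factorial)) := by ring

lemma xiBound (k : ℕ) (hk : 1 ≤ k) : paperXi k * 2^k ≤ (k.factorial : ℝ) := by
  rcases Nat.even_or_odd k with he | ho
  · obtain ⟨M, rfl⟩ := he
    obtain ⟨m, rfl⟩ : ∃ m, M = m + 1 := ⟨M - 1, by omega⟩
    have hne : ¬ (m + 1 + (m + 1) = 1) := by omega
    have hodd : ¬ Odd (m + 1 + (m + 1)) := by simp [Nat.odd_iff]; omega
    have hidx : (m + 1 + (m + 1) - 2) / 2 = m := by omega
    rw [paperXi, if_neg hne, if_neg hodd, hidx]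
    have h := natA m
    have h' : ((4^m * (m.factorial)^2 : ℕ) : ℝ) ≤ ((2*m+2).factorial : ℕ) := Nat.cast_le.mpr h
    push_cast at h'
    have hk2 : (2 : ℝ)^(m + 1 + (m + 1)) = 4 * 4^m := by
      rw [show m + 1 + (m + 1) = 2*m + 2 by ring, pow_add, pow_mul]; norm_num [mul_comm]
    have hfac : (m + 1 + (m + 1)) = 2*m + 2 := by ring
    rw [hk2, hfac]
    nlinarith [h']
  · obtain ⟨m, rfl⟩ := ho
    rcases Nat.eq_zero_or_pos m with rfl | hm
    · norm_num [paperXi, Nat.factorial]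
    obtain ⟨n, rfl⟩ : ∃ n, m = n + 1 := ⟨m - 1, by omega⟩
    have hne : ¬ (2 * (n + 1) + 1 = 1) := by omega
    have hodd : Odd (2 * (n + 1) + 1) := ⟨n + 1, by ring⟩
    have h1 : (2 * (n + 1) + 1 - 1) / 2 = n + 1 := by omega
    have h3 : (2 * (n + 1) + 1 - 3) / 2 = n := by omega
    rw [paperXi, if_neg hne, if_pos hodd, h1, h3]
    have h' : ((4^(n+1) * (n+1).factorial * n.factorial : ℕ) : ℝ) ≤ ((2 * (2*n+3).factorial : ℕ) : ℝ) :=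
      Nat.cast_le.mpr (natB n)
    push_cast at h'
    have hk2 : (2 : ℝ)^(2 * (n + 1) + 1) = 2 * 4^(n+1) := by
      rw [show 2*(n+1)+1 = 2*(n+1) + 1 by ring, pow_add, pow_mul]; norm_num [mul_comm]
    have hfac : 2 * (n + 1) + 1 = 2*n + 3 := by ring
    rw [hk2, hfac]
    nlinarith [h']

lemma prodRangeSub (n : ℕ) : ∏ x ∈ Finset.range n, (n - x) = n.factorial := by
  induction n with
  | zero => simp
  | succ m ih =>
    rw [Finset.prod_range_succ']
    have h : ∀ x ∈ Finset.range m, (m + 1 - (x + 1)) = m - x := by intro x _; omega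
    rw [Finset.prod_congr rfl h, ih]
    simp [Nat.factorial_succ, Nat.mul_comm]

lemma prodDist (k : ℕ) (i : Fin (k+1)) :
    ∏ j ∈ Finset.univ.erase i, Nat.dist i.val j.val
      = i.val.factorial * (k - i.val).factorial := by
  have hik : i.val ≤ k := by omega
  have h12 : ∏ j ∈ Finset.univ.erase i, Nat.dist i.val j.val
      = ∏ j : Fin (k+1), (if j.val = i.val then 1 else Nat.dist i.val j.val) := by
    have hgi : (fun j : Fin (k+1) => if j.val = i.val then 1 else Nat.dist i.val j.val) i = 1 := by
      simp
    rw [← Finset.prod_erase (f := fun j : Fin (k+1) => if j.val = i.val then 1 else Nat.dist i.val j.val) Finset.univ hgi]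
    refine Finset.prod_congr rfl fun j hj => ?_
    have hji : j ≠ i := (Finset.mem_erase.mp hj).1
    exact (if_neg (fun h => hji (Fin.ext h))).symm
  have h3 : ∏ j : Fin (k+1), (if j.val = i.val then 1 else Nat.dist i.val j.val)
      = ∏ x ∈ Finset.range (k+1), (if x = i.val then 1 else Nat.dist i.val x) :=
    (Fin.prod_univ_eq_prod_range (fun x => if x = i.val then 1 else Nat.dist i.val x) (k+1))
  have h4 : ∏ x ∈ Finset.range (k+1), (if x = i.val then 1 else Nat.dist i.val x)
      = (∏ x ∈ Finset.Ico 0 i.val, (if x = i.val then 1 else Nat.dist i.val x))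
        * ∏ x ∈ Finset.Ico i.val (k+1), (if x = i.val then 1 else Nat.dist i.val x) := by
    rw [Finset.prod_Ico_consecutive _ (Nat.zero_le _) (by omega), ← Finset.range_eq_Ico]
  have h5 : (∏ x ∈ Finset.Ico 0 i.val, (if x = i.val then 1 else Nat.dist i.val x))
      = i.val.factorial := by
    rw [← Finset.range_eq_Ico]
    rw [Finset.prod_congr rfl (fun x hx => ?_), prodRangeSub i.val]
    have hx' := Finset.mem_range.mp hx
    rw [if_neg (by omega), Nat.dist_eq_sub_of_le_right (le_of_lt hx')]
  have h6 : (∏ x ∈ Finset.Ico i.val (k+1), (if x = i.val then 1 else Nat.dist i.val x))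
      = (k - i.val).factorial := by
    rw [Finset.prod_Ico_eq_prod_range]
    have hc : k + 1 - i.val = (k - i.val) + 1 := by omega
    rw [hc, Finset.prod_range_succ']
    have h : ∀ x ∈ Finset.range (k - i.val),
        (if i.val + (x+1) = i.val then 1 else Nat.dist i.val (i.val + (x+1))) = x + 1 := by
      intro x _
      rw [if_neg (by omega), Nat.dist_eq_sub_of_le (by omega)]
      omega
    rw [Finset.prod_congr rfl h, if_pos (by omega), mul_one,
      Finset.prod_range_add_one_eq_factorial]
  rw [h12, h3, h4, h5, h6]


/-- `k+1` separated points `d*` cannot all have small products of distances to `k` points: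
`max_j |∏_q (d*_j - d_q)| ≥ ξ(k) · (d*_min)^k`. -/
theorem stmt_10 (k : ℕ) (hk : 1 ≤ k) (dstar : Fin (k + 1) → ℝ) (hmono : StrictMono dstar)
    (dmin : ℝ)
    (hdmin : IsLeast {x : ℝ | ∃ i j : Fin (k + 1), i ≠ j ∧ x = |dstar i - dstar j|} dmin)
    (d : Fin k → ℝ) (hd : Monotone d) :
    Finset.univ.sup' ⟨(0 : Fin (k + 1)), Finset.mem_univ _⟩
        (fun j => |∏ q : Fin k, (dstar j - d q)|) ≥ paperXi k * dmin ^ k := by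
  classical
  set M := Finset.univ.sup' ⟨(0 : Fin (k + 1)), Finset.mem_univ _⟩
      (fun j => |∏ q : Fin k, (dstar j - d q)|) with hMdef
  -- dmin > 0
  obtain ⟨i0, j0, hij0, he0⟩ := hdmin.1
  have hdminpos : 0 < dmin := by
    rw [he0]; exact abs_pos.mpr (sub_ne_zero.mpr (hmono.injective.ne hij0))
  -- separation
  have hstep : ∀ (n : ℕ) (a b : Fin (k+1)), b.val = a.val + n →
      (n : ℝ) * dmin ≤ dstar b - dstar a := by
    intro n
    induction n with
    | zero =>
      intro a b hab
      have : b = a := Fin.ext (by omega)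
      subst this; simp
    | succ n ih =>
      intro a b hab
      have hc : a.val + n < k + 1 := by omega
      set c : Fin (k+1) := ⟨a.val + n, hc⟩ with hcdef
      have h1 : (n : ℝ) * dmin ≤ dstar c - dstar a := ih a c rfl
      have hcb : c < b := by rw [Fin.lt_def]; simp [hcdef]; omega
      have h2 : dmin ≤ dstar b - dstar c := by
        have := hdmin.2 ⟨b, c, Fin.ne_of_gt hcb, rfl⟩
        rwa [abs_of_pos (sub_pos.mpr (hmono hcb))] at this
      push_cast
      linarith
  have hsep : ∀ a b : Fin (k+1), a ≠ b →
      (Nat.dist a.val b.val : ℝ) * dmin ≤ |dstar a - dstar b| := by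
    intro a b hab
    rcases lt_trichotomy a b with h | h | h
    · have hv : a.val < b.val := h
      rw [Nat.dist_eq_sub_of_le (le_of_lt hv), abs_sub_comm,
        abs_of_pos (sub_pos.mpr (hmono h))]
      have h2 := hstep (b.val - a.val) a b (by omega)
      rw [Nat.cast_sub (le_of_lt hv)]
      rw [Nat.cast_sub (le_of_lt hv)] at h2
      exact h2
    · exact absurd h hab
    · have hv : b.val < a.val := h
      rw [Nat.dist_eq_sub_of_le_right (le_of_lt hv),
        abs_of_pos (sub_pos.mpr (hmono h))]
      have h2 := hstep (a.val - b.val) b a (by omega)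
      rw [Nat.cast_sub (le_of_lt hv)]
      rw [Nat.cast_sub (le_of_lt hv)] at h2
      exact h2
  -- product lower bound
  have hcard : ∀ i : Fin (k+1), (Finset.univ.erase i).card = k := by
    intro i; rw [Finset.card_erase_of_mem (Finset.mem_univ i)]; simp
  have hprodLB : ∀ i : Fin (k+1),
      ((i.val.factorial * (k - i.val).factorial : ℕ) : ℝ) * dmin ^ k
        ≤ ∏ j ∈ Finset.univ.erase i, |dstar i - dstar j| := by
    intro i
    have heq : ((i.val.factorial * (k - i.val).factorial : ℕ) : ℝ) * dmin ^ k
        = ∏ j ∈ Finset.univ.erase i, ((Nat.dist i.val j.val : ℝ) * dmin) := by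
      rw [Finset.prod_mul_distrib, Finset.prod_const, hcard i, ← Nat.cast_prod, prodDist]
    rw [heq]
    refine Finset.prod_le_prod (fun j _ => by positivity) (fun j hj => ?_)
    exact hsep i j (Ne.symm (Finset.mem_erase.mp hj).1)
  -- Lagrange
  have hinj : Set.InjOn dstar ↑(Finset.univ : Finset (Fin (k+1))) :=
    fun a _ b _ h => hmono.injective h
  set P : Polynomial ℝ := Lagrange.nodal Finset.univ d with hPdef
  have hdeg : P.degree < (Finset.univ : Finset (Fin (k+1))).card := by
    rw [hPdef, Lagrange.degree_nodal]
    simp only [Finset.card_univ, Fintype.card_fin]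
    exact_mod_cast Nat.lt_succ_self k
  have hinterp := Lagrange.eq_interpolate hinj hdeg
  have hco : P.coeff k = 1 := by
    have hm : P.Monic := Lagrange.nodal_monic
    have hnd : P.natDegree = k := by
      rw [hPdef, Lagrange.natDegree_nodal]; simp
    rw [← hnd]; exact hm.coeff_natDegree
  have hcoR : (Lagrange.interpolate Finset.univ dstar fun i => P.eval (dstar i)).coeff k
      = ∑ i : Fin (k+1), P.eval (dstar i) * Lagrange.nodalWeight Finset.univ dstar i := by
    rw [Lagrange.interpolate_apply, Polynomial.finset_sum_coeff]
    refine Finset.sum_congr rfl fun i _ => ?_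
    have hN : (Lagrange.nodal (Finset.univ.erase i) dstar).coeff k = 1 := by
      have hm : (Lagrange.nodal (Finset.univ.erase i) dstar).Monic := Lagrange.nodal_monic
      have hnd : (Lagrange.nodal (Finset.univ.erase i) dstar).natDegree = k := by
        rw [Lagrange.natDegree_nodal, hcard i]
      have hc2 := hm.coeff_natDegree
      rwa [hnd] at hc2
    rw [Lagrange.basis_eq_prod_sub_inv_mul_nodal_div (Finset.mem_univ i),
      ← Lagrange.nodal_erase_eq_nodal_div (Finset.mem_univ i),
      Polynomial.coeff_C_mul, Polynomial.coeff_C_mul, hN, mul_one]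
  have hident : (1:ℝ) = ∑ i : Fin (k+1), P.eval (dstar i) * Lagrange.nodalWeight Finset.univ dstar i := by
    rw [← hcoR, ← hinterp, hco]
  -- bound terms
  have hMnn : ∀ i : Fin (k+1), |P.eval (dstar i)| ≤ M := by
    intro i
    rw [hPdef, Lagrange.eval_nodal]
    exact Finset.le_sup' (fun j => |∏ q : Fin k, (dstar j - d q)|) (Finset.mem_univ i)
  have hM0 : 0 ≤ M := le_trans (abs_nonneg _) (hMnn 0)
  have hwb : ∀ i : Fin (k+1),
      |P.eval (dstar i) * Lagrange.nodalWeight Finset.univ dstar i|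
        ≤ M * (((i.val.factorial * (k - i.val).factorial : ℕ) : ℝ) * dmin ^ k)⁻¹ := by
    intro i
    have hffpos : (0:ℝ) < ((i.val.factorial * (k - i.val).factorial : ℕ) : ℝ) := by
      have := Nat.factorial_pos i.val
      have := Nat.factorial_pos (k - i.val)
      positivity
    have hcpos : (0:ℝ) < ((i.val.factorial * (k - i.val).factorial : ℕ) : ℝ) * dmin ^ k := by
      positivity
    have hwabs : |Lagrange.nodalWeight Finset.univ dstar i|
        ≤ (((i.val.factorial * (k - i.val).factorial : ℕ) : ℝ) * dmin ^ k)⁻¹ := by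
      rw [Lagrange.nodalWeight, Finset.abs_prod]
      have habs : ∀ j ∈ Finset.univ.erase i, |(dstar i - dstar j)⁻¹| = |dstar i - dstar j|⁻¹ :=
        fun j _ => abs_inv _
      rw [Finset.prod_congr rfl habs, Finset.prod_inv_distrib]
      exact inv_anti₀ hcpos (hprodLB i)
    rw [abs_mul]
    exact mul_le_mul (hMnn i) hwabs (abs_nonneg _) hM0
  -- binomial sum
  have hsum : ∑ i : Fin (k+1), (((i.val.factorial * (k - i.val).factorial : ℕ) : ℝ))⁻¹
      = 2^k / (k.factorial : ℝ) := by
    have hkfne : (k.factorial : ℝ) ≠ 0 := by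
      exact_mod_cast (Nat.factorial_pos k).ne'
    rw [eq_div_iff hkfne, Finset.sum_mul]
    have hterm : ∀ i : Fin (k+1),
        (((i.val.factorial * (k - i.val).factorial : ℕ) : ℝ))⁻¹ * (k.factorial : ℝ)
          = (k.choose i.val : ℝ) := by
      intro i
      have hle : i.val ≤ k := by omega
      have h := Nat.choose_mul_factorial_mul_factorial hle
      have hffne : (((i.val.factorial * (k - i.val).factorial : ℕ) : ℝ)) ≠ 0 := by
        have := Nat.factorial_pos i.val
        have := Nat.factorial_pos (k - i.val)
        positivity
      rw [inv_mul_eq_div, div_eq_iff hffne, ← h]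
      push_cast; ring
    rw [Finset.sum_congr rfl (fun i _ => hterm i),
      Fin.sum_univ_eq_sum_range (fun i => (k.choose i : ℝ)) (k+1)]
    rw [← Nat.cast_sum, Nat.sum_range_choose]
    push_cast; ring
  -- conclude
  have h1 : (1:ℝ) ≤ ∑ i : Fin (k+1), |P.eval (dstar i) * Lagrange.nodalWeight Finset.univ dstar i| := by
    calc (1:ℝ) = |∑ i : Fin (k+1), P.eval (dstar i) * Lagrange.nodalWeight Finset.univ dstar i| := by
          rw [← hident]; norm_num
      _ ≤ _ := Finset.abs_sum_le_sum_abs _ _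
  have h2 := Finset.sum_le_sum (fun i (_ : i ∈ Finset.univ) => hwb i)
  have h3 : ∑ i : Fin (k+1), M * (((i.val.factorial * (k - i.val).factorial : ℕ) : ℝ) * dmin ^ k)⁻¹
      = M * ((dmin ^ k)⁻¹ * (2^k / (k.factorial : ℝ))) := by
    rw [← Finset.mul_sum]
    congr 1
    simp_rw [mul_inv]
    rw [← Finset.sum_mul, hsum]
    ring
  have h4 : (1:ℝ) ≤ M * ((dmin ^ k)⁻¹ * (2^k / (k.factorial : ℝ))) := by
    calc (1:ℝ) ≤ _ := h1
      _ ≤ _ := h2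
      _ = _ := h3
  have hdk : (0:ℝ) < dmin ^ k := by positivity
  have hkf : (0:ℝ) < (k.factorial : ℝ) := by exact_mod_cast Nat.factorial_pos k
  have h2k : (0:ℝ) < (2:ℝ)^k := by positivity
  have hMlb : (k.factorial : ℝ) / 2^k * dmin ^ k ≤ M := by
    have h5 := mul_le_mul_of_nonneg_right h4
      (le_of_lt (mul_pos hdk (mul_pos hkf (by positivity : (0:ℝ) < ((2:ℝ)^k)⁻¹))))
    rw [one_mul] at h5
    calc (k.factorial : ℝ) / 2^k * dmin ^ k
        = dmin ^ k * ((k.factorial : ℝ) * ((2:ℝ)^k)⁻¹) := by ring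
      _ ≤ M * ((dmin ^ k)⁻¹ * (2^k / (k.factorial : ℝ)))
            * (dmin ^ k * ((k.factorial : ℝ) * ((2:ℝ)^k)⁻¹)) := h5
      _ = M := by field_simp
  have hxi : paperXi k * dmin ^ k ≤ (k.factorial : ℝ) / 2^k * dmin ^ k := by
    have := xiBound k hk
    have hx : paperXi k ≤ (k.factorial : ℝ) / 2^k := by
      rw [le_div_iff₀ h2k]; exact this
    exact mul_le_mul_of_nonneg_right hx (le_of_lt hdk)
  exact le_trans hxi hMlb
end

section
/- For every integer n ≥ 2, 2^(n−1)·(2n−1)!·√(4n−1) / (ζ(n)·(n−2)!) ≤ 7.73·√(4n−1)·(2n−1)·4^(2n−1) / (4e·π^(3/2)), where ζ(n) = (n/2)!·((n−2)/2)! for even n and (((n−1)/2)!)² for odd n. -/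
open Real

section aux


lemma cb_sq (k : ℕ) : (3 * k + 1) * Nat.centralBinom k ^ 2 ≤ 16 ^ k := by
  induction k with
  | zero => simp [Nat.centralBinom]
  | succ k ih =>
    have h := Nat.succ_mul_centralBinom_succ k
    have hsq : ((k + 1) * Nat.centralBinom (k + 1)) ^ 2
        = (2 * (2 * k + 1) * Nat.centralBinom k) ^ 2 := by rw [h]
    have hpos : 0 < (3 * k + 1) * (k + 1) ^ 2 := by positivity
    refine Nat.le_of_mul_le_mul_left ?_ hpos
    have e1 : (3 * k + 1) * (k + 1) ^ 2 * ((3 * (k + 1) + 1) * Nat.centralBinom (k + 1) ^ 2)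
        = (3 * (k + 1) + 1) * (3 * k + 1) * (2 * (2 * k + 1)) ^ 2 * Nat.centralBinom k ^ 2 := by
      have : (k + 1) ^ 2 * Nat.centralBinom (k + 1) ^ 2
          = (2 * (2 * k + 1)) ^ 2 * Nat.centralBinom k ^ 2 := by
        rw [← mul_pow, hsq, mul_pow]
      ring_nf
      ring_nf at this
      nlinarith [this]
    rw [e1]
    calc (3 * (k + 1) + 1) * (3 * k + 1) * (2 * (2 * k + 1)) ^ 2 * Nat.centralBinom k ^ 2
        = (3 * (k + 1) + 1) * (2 * (2 * k + 1)) ^ 2 * ((3 * k + 1) * Nat.centralBinom k ^ 2) := by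
          ring
      _ ≤ (3 * (k + 1) + 1) * (2 * (2 * k + 1)) ^ 2 * 16 ^ k := Nat.mul_le_mul_left _ ih
      _ ≤ (3 * k + 1) * (k + 1) ^ 2 * 16 * 16 ^ k := by
          have : (3 * (k + 1) + 1) * (2 * (2 * k + 1)) ^ 2 ≤ (3 * k + 1) * (k + 1) ^ 2 * 16 := by
            nlinarith
          exact Nat.mul_le_mul_right _ this
      _ = (3 * k + 1) * (k + 1) ^ 2 * 16 ^ (k + 1) := by ring

lemma sq_trick {a b : ℕ} (h : a ^ 2 ≤ b ^ 2) : a ≤ b :=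
  (Nat.pow_le_pow_iff_left two_ne_zero).mp h

lemma pow_sixteen (m : ℕ) : (16:ℕ) ^ (2 * m) * 16 ^ m = (64 ^ m) ^ 2 := by
  rw [show (16:ℕ) = 2^4 from rfl, show (64:ℕ) = 2^6 from rfl,
    ← pow_mul, ← pow_mul, ← pow_add, ← pow_mul, ← pow_mul]
  congr 1
  ring

lemma odd_key (m : ℕ) :
    10000 * (2 * m) * (Nat.centralBinom (2 * m) * Nat.centralBinom m) ≤ 5104 * 64 ^ m := by
  apply sq_trick
  have h1 := cb_sq (2 * m)
  have h2 := cb_sq m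
  have key : (6 * m + 1) * (3 * m + 1) *
      (Nat.centralBinom (2 * m) ^ 2 * Nat.centralBinom m ^ 2) ≤ 16 ^ (2 * m) * 16 ^ m := by
    calc (6 * m + 1) * (3 * m + 1) * (Nat.centralBinom (2 * m) ^ 2 * Nat.centralBinom m ^ 2)
        = ((3 * (2 * m) + 1) * Nat.centralBinom (2 * m) ^ 2) *
          ((3 * m + 1) * Nat.centralBinom m ^ 2) := by ring
      _ ≤ 16 ^ (2 * m) * 16 ^ m := Nat.mul_le_mul h1 h2
  have hpoly : 10000 ^ 2 * (2 * m) ^ 2 ≤ 5104 ^ 2 * ((6 * m + 1) * (3 * m + 1)) := by nlinarith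
  calc (10000 * (2 * m) * (Nat.centralBinom (2 * m) * Nat.centralBinom m)) ^ 2
      = 10000 ^ 2 * (2 * m) ^ 2 * (Nat.centralBinom (2 * m) ^ 2 * Nat.centralBinom m ^ 2) := by
        ring
    _ ≤ 5104 ^ 2 * ((6 * m + 1) * (3 * m + 1)) *
        (Nat.centralBinom (2 * m) ^ 2 * Nat.centralBinom m ^ 2) := Nat.mul_le_mul_right _ hpoly
    _ = 5104 ^ 2 * ((6 * m + 1) * (3 * m + 1) *
        (Nat.centralBinom (2 * m) ^ 2 * Nat.centralBinom m ^ 2)) := by ring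
    _ ≤ 5104 ^ 2 * (16 ^ (2 * m) * 16 ^ m) := Nat.mul_le_mul_left _ key
    _ = (5104 * 64 ^ m) ^ 2 := by rw [pow_sixteen]; ring

lemma even_key (k : ℕ) :
    10000 * ((k + 1) * (2 * k + 1)) *
        (Nat.centralBinom (2 * (k + 1)) * Nat.centralBinom (k + 1))
      ≤ 1276 * (4 * k + 3) * 64 ^ (k + 1) := by
  apply sq_trick
  have h1 := cb_sq (2 * (k + 1))
  have h2 := cb_sq (k + 1)
  have key : (6 * (k + 1) + 1) * (3 * (k + 1) + 1) *
      (Nat.centralBinom (2 * (k + 1)) ^ 2 * Nat.centralBinom (k + 1) ^ 2)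
      ≤ 16 ^ (2 * (k + 1)) * 16 ^ (k + 1) := by
    calc (6 * (k + 1) + 1) * (3 * (k + 1) + 1) *
        (Nat.centralBinom (2 * (k + 1)) ^ 2 * Nat.centralBinom (k + 1) ^ 2)
        = ((3 * (2 * (k + 1)) + 1) * Nat.centralBinom (2 * (k + 1)) ^ 2) *
          ((3 * (k + 1) + 1) * Nat.centralBinom (k + 1) ^ 2) := by ring
      _ ≤ _ := Nat.mul_le_mul h1 h2
  have hpoly : 10000 ^ 2 * ((k + 1) * (2 * k + 1)) ^ 2
      ≤ (1276 * (4 * k + 3)) ^ 2 * ((6 * (k + 1) + 1) * (3 * (k + 1) + 1)) := by nlinarith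
  calc (10000 * ((k + 1) * (2 * k + 1)) *
        (Nat.centralBinom (2 * (k + 1)) * Nat.centralBinom (k + 1))) ^ 2
      = 10000 ^ 2 * ((k + 1) * (2 * k + 1)) ^ 2 *
        (Nat.centralBinom (2 * (k + 1)) ^ 2 * Nat.centralBinom (k + 1) ^ 2) := by ring
    _ ≤ (1276 * (4 * k + 3)) ^ 2 * ((6 * (k + 1) + 1) * (3 * (k + 1) + 1)) *
        (Nat.centralBinom (2 * (k + 1)) ^ 2 * Nat.centralBinom (k + 1) ^ 2) :=
        Nat.mul_le_mul_right _ hpoly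
    _ = (1276 * (4 * k + 3)) ^ 2 * ((6 * (k + 1) + 1) * (3 * (k + 1) + 1) *
        (Nat.centralBinom (2 * (k + 1)) ^ 2 * Nat.centralBinom (k + 1) ^ 2)) := by ring
    _ ≤ (1276 * (4 * k + 3)) ^ 2 * (16 ^ (2 * (k + 1)) * 16 ^ (k + 1)) :=
        Nat.mul_le_mul_left _ key
    _ = (1276 * (4 * k + 3) * 64 ^ (k + 1)) ^ 2 := by rw [pow_sixteen]; ring

lemma cb_fact (j : ℕ) : (2 * j).factorial = Nat.centralBinom j * j.factorial * j.factorial := by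
  have h := Nat.choose_mul_factorial_mul_factorial (show j ≤ 2 * j by omega)
  rw [show 2 * j - j = j by omega] at h
  rw [← h, Nat.centralBinom]

/-- natural-number version of paperZeta -/
def zetaN (n : ℕ) : ℕ :=
  if Even n then Nat.factorial (n / 2) * Nat.factorial ((n - 2) / 2)
  else Nat.factorial ((n - 1) / 2) ^ 2

lemma nat_main (n : ℕ) (hn : 2 ≤ n) :
    10000 * (2 ^ (n - 1) * Nat.factorial (2 * n - 1))
      ≤ 1276 * ((2 * n - 1) * 4 ^ (2 * n - 1)) * (zetaN n * Nat.factorial (n - 2)) := by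
  obtain ⟨k, hk⟩ : ∃ k, n = 2 * k + 2 ∨ n = 2 * k + 3 := by
    rcases Nat.even_or_odd n with ⟨m, hm⟩ | ⟨m, hm⟩
    · exact ⟨m - 1, Or.inl (by omega)⟩
    · exact ⟨m - 1, Or.inr (by omega)⟩
  set c2 := Nat.centralBinom (2 * (k + 1)) with hc2
  set c1 := Nat.centralBinom (k + 1) with hc1
  have hf4 : Nat.factorial (4 * k + 4)
      = c2 * Nat.factorial (2 * k + 2) * Nat.factorial (2 * k + 2) := by
    have := cb_fact (2 * (k + 1))
    rw [show 2 * (2 * (k + 1)) = 4 * k + 4 by ring, show 2 * (k + 1) = 2 * k + 2 by ring] at this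
    exact this
  have hf2 : Nat.factorial (2 * k + 2)
      = c1 * Nat.factorial (k + 1) * Nat.factorial (k + 1) := by
    have := cb_fact (k + 1)
    rw [show 2 * (k + 1) = 2 * k + 2 by ring] at this
    exact this
  have hf2' : Nat.factorial (2 * k + 2)
      = (2 * k + 2) * ((2 * k + 1) * Nat.factorial (2 * k)) := by
    rw [show 2 * k + 2 = (2 * k + 1) + 1 by ring, Nat.factorial_succ, Nat.factorial_succ]
  have hf2'' : Nat.factorial (2 * k + 2) = (2 * k + 2) * Nat.factorial (2 * k + 1) := by
    rw [show 2 * k + 2 = (2 * k + 1) + 1 by ring, Nat.factorial_succ]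
  have hf1 : Nat.factorial (k + 1) = (k + 1) * Nat.factorial k := Nat.factorial_succ k
  -- power conversions
  have p4 : ∀ m : ℕ, (4:ℕ) ^ m = 2 ^ (2 * m) := fun m => by
    calc (4:ℕ) ^ m = (2 ^ 2) ^ m := by norm_num
      _ = 2 ^ (2 * m) := (pow_mul 2 2 m).symm
  have p64 : ∀ m : ℕ, (64:ℕ) ^ m = 2 ^ (6 * m) := fun m => by
    calc (64:ℕ) ^ m = (2 ^ 6) ^ m := by norm_num
      _ = 2 ^ (6 * m) := (pow_mul 2 6 m).symm
  rcases hk with rfl | rfl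
  · -- even case: n = 2k+2
    have hz : zetaN (2 * k + 2) = Nat.factorial (k + 1) * Nat.factorial k := by
      rw [zetaN, if_pos ⟨k + 1, by ring⟩, show (2 * k + 2) / 2 = k + 1 by omega,
        show (2 * k + 2 - 2) / 2 = k by omega]
    rw [hz, show 2 * k + 2 - 1 = 2 * k + 1 by omega, show 2 * (2 * k + 2) - 1 = 4 * k + 3 by omega,
      show 2 * k + 2 - 2 = 2 * k by omega]
    -- multiply both sides by (4k+4)
    refine Nat.le_of_mul_le_mul_left ?_ (show 0 < 4 * k + 4 by omega)
    have hbig : (4 * k + 4) * Nat.factorial (4 * k + 3) = Nat.factorial (4 * k + 4) := by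
      have h := Nat.factorial_succ (4 * k + 3)
      rw [show 4 * k + 3 + 1 = 4 * k + 4 by omega] at h
      exact h.symm
    have M := Nat.mul_le_mul_right
      (2 * 2 ^ (2 * k + 1) * (k + 1) *
        (Nat.factorial (k + 1) * Nat.factorial k * Nat.factorial (2 * k))) (even_key k)
    have eL : 10000 * ((k + 1) * (2 * k + 1)) * (c2 * c1) *
        (2 * 2 ^ (2 * k + 1) * (k + 1) *
          (Nat.factorial (k + 1) * Nat.factorial k * Nat.factorial (2 * k)))
        = (4 * k + 4) * (10000 * (2 ^ (2 * k + 1) * Nat.factorial (4 * k + 3))) := by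
      calc 10000 * ((k + 1) * (2 * k + 1)) * (c2 * c1) *
          (2 * 2 ^ (2 * k + 1) * (k + 1) *
            (Nat.factorial (k + 1) * Nat.factorial k * Nat.factorial (2 * k)))
          = 10000 * 2 ^ (2 * k + 1) *
            (c2 * (c1 * Nat.factorial (k + 1) * ((k + 1) * Nat.factorial k)) *
              ((2 * k + 2) * ((2 * k + 1) * Nat.factorial (2 * k)))) := by ring
        _ = 10000 * 2 ^ (2 * k + 1) *
            (c2 * Nat.factorial (2 * k + 2) * Nat.factorial (2 * k + 2)) := by
            rw [← hf1, ← hf2, ← hf2']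
        _ = 10000 * 2 ^ (2 * k + 1) * Nat.factorial (4 * k + 4) := by rw [← hf4]
        _ = (4 * k + 4) * (10000 * (2 ^ (2 * k + 1) * Nat.factorial (4 * k + 3))) := by
            rw [← hbig]; ring
    have eR : 1276 * (4 * k + 3) * 64 ^ (k + 1) *
        (2 * 2 ^ (2 * k + 1) * (k + 1) *
          (Nat.factorial (k + 1) * Nat.factorial k * Nat.factorial (2 * k)))
        = (4 * k + 4) * (1276 * ((4 * k + 3) * 4 ^ (4 * k + 3)) *
            (Nat.factorial (k + 1) * Nat.factorial k * Nat.factorial (2 * k))) := by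
      have hp : 64 ^ (k + 1) * (2 * 2 ^ (2 * k + 1)) * (k + 1)
          = (4 * k + 4) * 4 ^ (4 * k + 3) := by
        rw [p64, p4, ← pow_succ', ← pow_add]
        rw [show 6 * (k + 1) + (2 * k + 1 + 1) = (2 * (4 * k + 3)) + 2 by ring, pow_add]
        ring
      calc 1276 * (4 * k + 3) * 64 ^ (k + 1) *
          (2 * 2 ^ (2 * k + 1) * (k + 1) *
            (Nat.factorial (k + 1) * Nat.factorial k * Nat.factorial (2 * k)))
          = 1276 * (4 * k + 3) * (64 ^ (k + 1) * (2 * 2 ^ (2 * k + 1)) * (k + 1)) *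
            (Nat.factorial (k + 1) * Nat.factorial k * Nat.factorial (2 * k)) := by ring
        _ = 1276 * (4 * k + 3) * ((4 * k + 4) * 4 ^ (4 * k + 3)) *
            (Nat.factorial (k + 1) * Nat.factorial k * Nat.factorial (2 * k)) := by rw [hp]
        _ = _ := by ring
    rw [← eL, ← eR]
    exact M
  · -- odd case: n = 2k+3
    have hz : zetaN (2 * k + 3) = Nat.factorial (k + 1) ^ 2 := by
      rw [zetaN, if_neg (by rw [Nat.even_iff]; omega), show (2 * k + 3 - 1) / 2 = k + 1 by omega]
    rw [hz, show 2 * k + 3 - 1 = 2 * k + 2 by omega, show 2 * (2 * k + 3) - 1 = 4 * k + 5 by omega,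
      show 2 * k + 3 - 2 = 2 * k + 1 by omega]
    have hf5 : Nat.factorial (4 * k + 5) = (4 * k + 5) * Nat.factorial (4 * k + 4) := by
      rw [show 4 * k + 5 = (4 * k + 4) + 1 by ring, Nat.factorial_succ]
    have M := Nat.mul_le_mul_right
      (2 ^ (2 * k + 2) * ((4 * k + 5) *
        (Nat.factorial (k + 1) ^ 2 * Nat.factorial (2 * k + 1))))
      (odd_key (k + 1))
    have eL : 10000 * (2 * (k + 1)) * (c2 * c1) *
        (2 ^ (2 * k + 2) * ((4 * k + 5) *
          (Nat.factorial (k + 1) ^ 2 * Nat.factorial (2 * k + 1))))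
        = 10000 * (2 ^ (2 * k + 2) * Nat.factorial (4 * k + 5)) := by
      calc 10000 * (2 * (k + 1)) * (c2 * c1) *
          (2 ^ (2 * k + 2) * ((4 * k + 5) *
            (Nat.factorial (k + 1) ^ 2 * Nat.factorial (2 * k + 1))))
          = 10000 * 2 ^ (2 * k + 2) * ((4 * k + 5) *
            (c2 * (c1 * Nat.factorial (k + 1) * Nat.factorial (k + 1)) *
              ((2 * k + 2) * Nat.factorial (2 * k + 1)))) := by ring
        _ = 10000 * 2 ^ (2 * k + 2) * ((4 * k + 5) *
            (c2 * Nat.factorial (2 * k + 2) * Nat.factorial (2 * k + 2))) := by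
            rw [← hf2, ← hf2'']
        _ = 10000 * 2 ^ (2 * k + 2) * ((4 * k + 5) * Nat.factorial (4 * k + 4)) := by
            rw [← hf4]
        _ = 10000 * (2 ^ (2 * k + 2) * Nat.factorial (4 * k + 5)) := by
            rw [hf5]; ring
    have eR : 5104 * 64 ^ (k + 1) *
        (2 ^ (2 * k + 2) * ((4 * k + 5) *
          (Nat.factorial (k + 1) ^ 2 * Nat.factorial (2 * k + 1))))
        = 1276 * ((4 * k + 5) * 4 ^ (4 * k + 5)) *
          (Nat.factorial (k + 1) ^ 2 * Nat.factorial (2 * k + 1)) := by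
      have hp : (5104:ℕ) * 64 ^ (k + 1) * 2 ^ (2 * k + 2) = 1276 * 4 ^ (4 * k + 5) := by
        calc (5104:ℕ) * 64 ^ (k + 1) * 2 ^ (2 * k + 2)
            = 1276 * (2 ^ 2 * (2 ^ (6 * (k + 1)) * 2 ^ (2 * k + 2))) := by rw [p64]; ring
          _ = 1276 * 2 ^ (2 + (6 * (k + 1) + (2 * k + 2))) := by rw [← pow_add, ← pow_add]
          _ = 1276 * 2 ^ (2 * (4 * k + 5)) := by
              rw [show 2 + (6 * (k + 1) + (2 * k + 2)) = 2 * (4 * k + 5) by omega]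
          _ = 1276 * 4 ^ (4 * k + 5) := by rw [p4]
      calc 5104 * 64 ^ (k + 1) *
          (2 ^ (2 * k + 2) * ((4 * k + 5) *
            (Nat.factorial (k + 1) ^ 2 * Nat.factorial (2 * k + 1))))
          = (5104 * 64 ^ (k + 1) * 2 ^ (2 * k + 2)) * ((4 * k + 5) *
            (Nat.factorial (k + 1) ^ 2 * Nat.factorial (2 * k + 1))) := by ring
        _ = (1276 * 4 ^ (4 * k + 5)) * ((4 * k + 5) *
            (Nat.factorial (k + 1) ^ 2 * Nat.factorial (2 * k + 1))) := by rw [hp]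
        _ = _ := by ring
    rw [← eL, ← eR]
    exact M


lemma paperZeta_eq_s15 (n : ℕ) : paperZeta n = (zetaN n : ℝ) := by
  rw [paperZeta, zetaN]
  split_ifs <;> push_cast <;> ring

lemma zetaN_pos (n : ℕ) : 0 < zetaN n := by
  rw [zetaN]; split_ifs <;> positivity

lemma const_bound : 4 * Real.exp 1 * π ^ ((3 : ℝ) / 2) ≤ 60.56 := by
  have hπ32 : π ^ ((3 : ℝ) / 2) = π * Real.sqrt π := by
    rw [show (3 : ℝ) / 2 = 1 + 1 / 2 by norm_num, Real.rpow_add Real.pi_pos, Real.rpow_one,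
      ← Real.sqrt_eq_rpow]
  have hsπ : Real.sqrt π ≤ 1.77246 := by
    rw [show (1.77246 : ℝ) = Real.sqrt (1.77246 ^ 2) from (Real.sqrt_sq (by norm_num)).symm]
    exact Real.sqrt_le_sqrt (by nlinarith [Real.pi_lt_d6])
  have hsπ0 : (0 : ℝ) ≤ Real.sqrt π := Real.sqrt_nonneg π
  have he : Real.exp 1 ≤ 2.7182818286 := Real.exp_one_lt_d9.le
  have he0 : (0 : ℝ) < Real.exp 1 := Real.exp_pos 1
  have hp : π ≤ 3.141593 := Real.pi_lt_d6.le
  rw [hπ32]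
  nlinarith [Real.pi_pos, mul_pos he0 Real.pi_pos]

end aux

theorem stmt_15 (n : ℕ) (hn : 2 ≤ n) :
    2 ^ (n - 1) * (Nat.factorial (2 * n - 1) : ℝ) * Real.sqrt (4 * (n : ℝ) - 1) /
        (paperZeta n * (Nat.factorial (n - 2) : ℝ)) ≤
      7.73 * Real.sqrt (4 * (n : ℝ) - 1) * (2 * (n : ℝ) - 1) * 4 ^ (2 * n - 1) /
        (4 * Real.exp 1 * π ^ ((3 : ℝ) / 2)) := by
  have hn' : (2 : ℝ) ≤ (n : ℝ) := by exact_mod_cast hn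
  have hS : 0 < Real.sqrt (4 * (n : ℝ) - 1) := Real.sqrt_pos.mpr (by linarith)
  have hD : 0 < paperZeta n * (Nat.factorial (n - 2) : ℝ) := by
    rw [paperZeta_eq_s15]
    have := zetaN_pos n
    have := Nat.factorial_pos (n - 2)
    positivity
  have hE : 0 < 4 * Real.exp 1 * π ^ ((3 : ℝ) / 2) := by positivity
  rw [div_le_div_iff₀ hD hE]
  -- cast the natural-number inequality
  have hcast : (10000 : ℝ) * (2 ^ (n - 1) * (Nat.factorial (2 * n - 1) : ℝ))
      ≤ 1276 * ((2 * (n : ℝ) - 1) * 4 ^ (2 * n - 1)) *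
        (paperZeta n * (Nat.factorial (n - 2) : ℝ)) := by
    rw [paperZeta_eq_s15]
    have h := nat_main n hn
    have h2 : (1 : ℕ) ≤ 2 * n := by omega
    calc (10000 : ℝ) * (2 ^ (n - 1) * (Nat.factorial (2 * n - 1) : ℝ))
        = ((10000 * (2 ^ (n - 1) * Nat.factorial (2 * n - 1)) : ℕ) : ℝ) := by push_cast; ring
      _ ≤ ((1276 * ((2 * n - 1) * 4 ^ (2 * n - 1)) * (zetaN n * Nat.factorial (n - 2)) : ℕ) : ℝ) := by
          exact_mod_cast h
      _ = 1276 * ((2 * (n : ℝ) - 1) * 4 ^ (2 * n - 1)) * ((zetaN n : ℝ) * (Nat.factorial (n - 2) : ℝ)) := by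
          push_cast [Nat.cast_sub h2]
          ring
  have hA : (0 : ℝ) ≤ 2 ^ (n - 1) * (Nat.factorial (2 * n - 1) : ℝ) := by positivity
  have hBD : (0 : ℝ) ≤ (2 * (n : ℝ) - 1) * 4 ^ (2 * n - 1) *
      (paperZeta n * (Nat.factorial (n - 2) : ℝ)) := by
    have h4 : (0:ℝ) ≤ (4:ℝ) ^ (2 * n - 1) := by positivity
    nlinarith [hD, hn']
  have key : 2 ^ (n - 1) * (Nat.factorial (2 * n - 1) : ℝ) * (4 * Real.exp 1 * π ^ ((3 : ℝ) / 2))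
      ≤ 7.73 * ((2 * (n : ℝ) - 1) * 4 ^ (2 * n - 1) *
        (paperZeta n * (Nat.factorial (n - 2) : ℝ))) := by
    nlinarith [const_bound, hcast, hA, hBD, hE]
  nlinarith [mul_le_mul_of_nonneg_left key hS.le, hS]
end

section
/- Let k ≥ 1, let −d ≤ d_1* < … < d_{k+1}* ≤ d with minimal gap d_min*, and let a_1*, …, a_{k+1}* be real numbers with |a_j*| ≥ m for all j, where m > 0. Let A* be the (2k+1)×(k+1) matrix with entries (d_j*)^(i−1), i = 1,…,2k+1, and for q ≤ k let A(q) be the (2k+1)×q matrix with entries d_j^(i−1) for real nodes d_1, …, d_q in [−d, d]. Then the infimum over all choices of q ≤ k nodes d_p ∈ [−d,d] and coefficients a_p ∈ ℝ of ‖A(q)·a − A*·a*‖₂ is at least ζ(k+1)·ξ(k)·m·(d_min*)^(2k) / (1+d)^(2k), where ζ(k+1) = ((k+1)/2)!·((k−1)/2)! for odd k and ((k/2)!)² for even k, and ξ as defined: ξ(1)=1/2, ξ(k)=((k−1)/2)!·((k−3)/2)!/4 for odd k ≥ 3, ξ(k)=(((k−2)/2)!)²/4 for even k. -/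
open Matrix

/-!
Write `r = A(q) a - A* a*` for the residual and let `W` be a polynomial of degree `2k` with
coefficient vector `w`. Then `⟪w, r⟫ = ∑ₚ aₚ W(dₚ) - ∑ⱼ a*ⱼ W(d*ⱼ)`, so if `W` vanishes at the
`q` nodes `dₚ` and at every `d*ⱼ` but one, `d*ₜ`, we get `m |W(d*ₜ)| ≤ ‖w‖₁ ‖r‖₂`. Take the roots
of `W` to be the `dₚ`, the `d*ⱼ` with `j ≠ t`, and `k - q` copies of the endpoint `±d` farther
from `d*ₜ`; all roots lie in `[-d, d]`, so `‖w‖₁ ≤ (1 + d) ^ (2k)`.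

The node `d*ₜ` is chosen among `d*₀, …, d*_q`. The monic `P = ∏ₚ (X - dₚ)` has degree `q`, so
Lagrange interpolation at these `q + 1` nodes gives `1 = ∑ᵢ P(d*ᵢ) / ∏_{j ≠ i} (d*ᵢ - d*ⱼ)`; since
`∏_{j ≠ i} |d*ᵢ - d*ⱼ| ≥ i! (q - i)! d_min ^ q` and `∑ᵢ 1 / (i! (q - i)!) = 2 ^ q / q!`, some `t`
has `∏ₚ |d*ₜ - dₚ| = |P(d*ₜ)| ≥ q! (d_min / 2) ^ q`. The constant then comes from
`t! (k - t)! ≥ ζ(k + 1)` and `2 ^ k ξ(k) ≤ k! ≤ q! k ^ (k - q)`.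
-/

open Finset Polynomial
open scoped Nat

lemma paperZeta_succ (k : ℕ) : paperZeta (k + 1) = (((k / 2)! * (k - k / 2)! : ℕ) : ℝ) := by
  rcases Nat.even_or_odd' k with ⟨n, rfl | rfl⟩
  · have hodd : ¬ Even (2 * n + 1) := Nat.not_even_bit1 n
    rw [paperZeta, if_neg hodd]
    rw [show (2 * n + 1 - 1) / 2 = n by omega, show 2 * n / 2 = n by omega,
      show 2 * n - n = n by omega]
    push_cast; ring
  · rw [paperZeta, if_pos ⟨n + 1, by ring⟩]
    rw [show (2 * n + 1 + 1) / 2 = n + 1 by omega, show (2 * n + 1 + 1 - 2) / 2 = n by omega,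
      show (2 * n + 1) / 2 = n by omega, show 2 * n + 1 - n = n + 1 by omega]
    push_cast; ring

lemma paperXi_add_two (n : ℕ) : paperXi (n + 2) = paperZeta (n + 1) / 4 := by
  rcases Nat.even_or_odd' n with ⟨m, rfl | rfl⟩
  · rw [paperXi, if_neg (by omega), if_neg (by rw [Nat.odd_iff]; omega), paperZeta_succ]
    rw [show (2 * m + 2 - 2) / 2 = m by omega, show 2 * m / 2 = m by omega,
      show 2 * m - m = m by omega]
    push_cast; ring
  · rw [paperXi, if_neg (by omega), if_pos (by rw [Nat.odd_iff]; omega), paperZeta_succ]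
    rw [show (2 * m + 1 + 2 - 1) / 2 = m + 1 by omega, show (2 * m + 1 + 2 - 3) / 2 = m by omega,
      show (2 * m + 1) / 2 = m by omega, show 2 * m + 1 - m = m + 1 by omega]
    push_cast; ring

lemma factorial_half_mul_factorial_le {k t : ℕ} (ht : t ≤ k) :
    (k / 2)! * (k - k / 2)! ≤ t ! * (k - t)! := by
  have hmid := Nat.choose_mul_factorial_mul_factorial (Nat.div_le_self k 2)
  have ht' := Nat.choose_mul_factorial_mul_factorial ht
  refine Nat.le_of_mul_le_mul_left ?_ (Nat.choose_pos (Nat.div_le_self k 2))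
  calc k.choose (k / 2) * ((k / 2)! * (k - k / 2)!) = k.choose t * (t ! * (k - t)!) := by
        rw [← mul_assoc, hmid, ← mul_assoc, ht']
    _ ≤ k.choose (k / 2) * (t ! * (k - t)!) :=
        Nat.mul_le_mul_right _ (Nat.choose_le_middle t k)

lemma two_pow_mul_factorial_half_mul_le (n : ℕ) :
    2 ^ n * ((n / 2)! * (n - n / 2)!) ≤ (n + 1)! := by
  have hsum : 2 ^ n ≤ (n + 1) * n.choose (n / 2) := by
    rw [← Nat.sum_range_choose]
    simpa using sum_le_sum fun i (_ : i ∈ range (n + 1)) => Nat.choose_le_middle i n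
  calc 2 ^ n * ((n / 2)! * (n - n / 2)!)
      ≤ (n + 1) * n.choose (n / 2) * ((n / 2)! * (n - n / 2)!) :=
        Nat.mul_le_mul_right _ hsum
    _ = (n + 1)! := by
        rw [mul_assoc, ← mul_assoc (n.choose _), Nat.choose_mul_factorial_mul_factorial
          (Nat.div_le_self n 2), Nat.factorial_succ]

lemma two_pow_mul_paperXi_le_factorial (k : ℕ) : 2 ^ k * paperXi k ≤ k ! := by
  match k with
  | 0 => norm_num [paperXi]
  | 1 => norm_num [paperXi]
  | n + 2 =>
    rw [paperXi_add_two, paperZeta_succ]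
    calc (2 : ℝ) ^ (n + 2) * ((((n / 2)! * (n - n / 2)! : ℕ) : ℝ) / 4)
        = ((2 ^ n * ((n / 2)! * (n - n / 2)!) : ℕ) : ℝ) := by push_cast; ring
      _ ≤ (n + 2)! := by
          exact_mod_cast (two_pow_mul_factorial_half_mul_le n).trans (Nat.factorial_le (by omega))

lemma factorial_le_factorial_mul_pow {q k : ℕ} (hq : q ≤ k) : k ! ≤ q ! * k ^ (k - q) := by
  calc k ! = (k - (k - q))! * k.descFactorial (k - q) :=
        (Nat.factorial_mul_descFactorial (Nat.sub_le k q)).symm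
    _ ≤ q ! * k ^ (k - q) := by
        rw [Nat.sub_sub_self hq]
        exact Nat.mul_le_mul_left _ (Nat.descFactorial_le_pow k _)

lemma paperZeta_mul_paperXi_mul_pow_le {k q t : ℕ} (hq : q ≤ k) (ht : t ≤ k) {δ : ℝ}
    (hδ : 0 ≤ δ) :
    paperZeta (k + 1) * paperXi k * δ ^ (2 * k) ≤
      q ! * (δ / 2) ^ q * (((t ! * (k - t)! : ℕ) : ℝ) * δ ^ k) * (k * δ / 2) ^ (k - q) := by
  have hζ : paperZeta (k + 1) ≤ ((t ! * (k - t)! : ℕ) : ℝ) := by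
    rw [paperZeta_succ]; exact_mod_cast factorial_half_mul_factorial_le ht
  have hξ : 2 ^ k * paperXi k ≤ q ! * (k : ℝ) ^ (k - q) :=
    (two_pow_mul_paperXi_le_factorial k).trans (by exact_mod_cast factorial_le_factorial_mul_pow hq)
  have hξ0 : 0 ≤ paperXi k := by unfold paperXi; split_ifs <;> positivity
  have hsplit : (2 : ℝ) ^ k = 2 ^ q * 2 ^ (k - q) := by rw [← pow_add, Nat.add_sub_cancel' hq]
  have hsplit' : δ ^ k = δ ^ q * δ ^ (k - q) := by rw [← pow_add, Nat.add_sub_cancel' hq]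
  calc paperZeta (k + 1) * paperXi k * δ ^ (2 * k)
      ≤ ((t ! * (k - t)! : ℕ) : ℝ) * (q ! * (k : ℝ) ^ (k - q) / 2 ^ k) * δ ^ (2 * k) := by
        gcongr
        rwa [le_div_iff₀ (by positivity), mul_comm]
    _ = _ := by
        rw [div_pow, div_pow, mul_pow, two_mul, pow_add, hsplit]
        nth_rewrite 2 [hsplit']
        field_simp

lemma prod_erase_range_dist {t n : ℕ} (htn : t ≤ n) :
    ∏ j ∈ (range (n + 1)).erase t, Nat.dist t j = t ! * (n - t)! := by
  induction n, htn using Nat.le_induction with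
  | base =>
    rw [range_add_one, erase_insert notMem_range_self, Nat.sub_self, Nat.factorial_zero, mul_one,
      ← Nat.descFactorial_self, Nat.descFactorial_eq_prod_range]
    exact prod_congr rfl fun j hj => Nat.dist_eq_sub_of_le_right (mem_range.1 hj).le
  | succ n htn ih =>
    rw [range_add_one, erase_insert_of_ne (by omega), prod_insert (by simp), ih,
      Nat.dist_eq_sub_of_le (by omega), Nat.sub_add_comm htn, Nat.factorial_succ]
    ring

lemma prod_erase_dist (n : ℕ) (t : Fin (n + 1)) :
    ∏ j ∈ univ.erase t, Nat.dist t j = (t : ℕ)! * (n - t)! := by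
  rw [← prod_erase_range_dist (Nat.lt_succ_iff.1 t.isLt), ← Nat.Iio_eq_range,
    ← Fin.map_valEmbedding_univ]
  change _ = ∏ j ∈ (map Fin.valEmbedding univ).erase (Fin.valEmbedding t), _
  rw [← map_erase, prod_map]
  rfl

lemma sum_inv_factorial_mul_factorial (n : ℕ) :
    ∑ i : Fin (n + 1), (((i : ℕ)! * (n - i)! : ℕ) : ℝ)⁻¹ = 2 ^ n / n ! := by
  have hchoose (i : ℕ) (hi : i ≤ n) : ((i ! * (n - i)! : ℕ) : ℝ)⁻¹ = n.choose i / n ! := by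
    rw [Nat.cast_choose ℝ hi]
    field_simp
    push_cast
    ring
  rw [Fin.sum_univ_eq_sum_range (fun i => ((i ! * (n - i)! : ℕ) : ℝ)⁻¹),
    sum_congr rfl fun i hi => hchoose i (Nat.lt_succ_iff.1 (mem_range.1 hi)), ← sum_div]
  exact_mod_cast congrArg (fun s : ℕ => (s : ℝ) / n !) (Nat.sum_range_choose n)

section Separated

variable {n : ℕ} {x : Fin (n + 1) → ℝ} {δ : ℝ}

lemma natDist_mul_le_abs_sub (hx : StrictMono x) (hδ : ∀ i j, i ≠ j → δ ≤ |x i - x j|)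
    (i j : Fin (n + 1)) : (Nat.dist i j : ℝ) * δ ≤ |x i - x j| := by
  have hmono : Monotone fun j : Fin (n + 1) => x j - (j : ℕ) * δ := by
    refine Fin.monotone_iff_le_succ.2 fun i => ?_
    have := hδ i.succ i.castSucc i.castSucc_lt_succ.ne'
    rw [abs_of_pos (sub_pos.2 (hx i.castSucc_lt_succ))] at this
    simp only [Fin.val_succ, Fin.val_castSucc, Nat.cast_succ]
    linarith
  wlog hij : i ≤ j generalizing i j
  · rw [Nat.dist_comm, abs_sub_comm]
    exact this j i (le_of_not_ge hij)
  have := hmono hij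
  rw [Nat.dist_eq_sub_of_le hij, Nat.cast_sub hij, abs_sub_comm,
    abs_of_nonneg (sub_nonneg.2 (hx.monotone hij))]
  linarith

lemma factorial_mul_factorial_mul_pow_le_prod_abs_sub (hδ : 0 ≤ δ)
    (hsep : ∀ i j : Fin (n + 1), (Nat.dist i j : ℝ) * δ ≤ |x i - x j|) (t : Fin (n + 1)) :
    (((t : ℕ)! * (n - t)! : ℕ) : ℝ) * δ ^ n ≤ ∏ j ∈ univ.erase t, |x t - x j| := by
  calc (((t : ℕ)! * (n - t)! : ℕ) : ℝ) * δ ^ n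
      = ∏ j ∈ univ.erase t, (Nat.dist t j : ℝ) * δ := by
        rw [prod_mul_distrib, prod_const, card_erase_of_mem (mem_univ t), card_univ,
          Fintype.card_fin, Nat.add_sub_cancel, ← prod_erase_dist, Nat.cast_prod]
    _ ≤ ∏ j ∈ univ.erase t, |x t - x j| :=
        prod_le_prod (fun j _ => by positivity) fun j _ => hsep t j

lemma one_le_sum_abs_eval_div_prod_abs_sub (hx : Function.Injective x) {P : ℝ[X]}
    (hP : P.Monic) (hdeg : P.natDegree = n) :
    1 ≤ ∑ i, |P.eval (x i)| / ∏ j ∈ univ.erase i, |x i - x j| := by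
  have hlead := Lagrange.coeff_eq_sum (s := univ) hx.injOn (P := P) (by
    rw [card_univ, Fintype.card_fin, degree_eq_natDegree hP.ne_zero, hdeg]
    exact_mod_cast n.lt_succ_self)
  have hcoeff : P.coeff n = 1 := hdeg ▸ hP.coeff_natDegree
  rw [card_univ, Fintype.card_fin, Nat.add_sub_cancel, hcoeff] at hlead
  calc (1 : ℝ) = |∑ i, P.eval (x i) / ∏ j ∈ univ.erase i, (x i - x j)| := by
        rw [← hlead, abs_one]
    _ ≤ _ := abs_sum_le_sum_abs _ _
    _ = _ := by simp only [abs_div, abs_prod]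

lemma exists_prod_abs_sub_ge (hδ : 0 < δ)
    (hsep : ∀ i j : Fin (n + 1), (Nat.dist i j : ℝ) * δ ≤ |x i - x j|) (y : Fin n → ℝ) :
    ∃ t, (n ! : ℝ) * (δ / 2) ^ n ≤ ∏ p, |x t - y p| := by
  have hinj : Function.Injective x := fun i j hij => by
    by_contra hne
    have hdist : (0 : ℝ) < Nat.dist i j := by
      exact_mod_cast Nat.dist_pos_of_ne (Fin.val_injective.ne hne)
    have := hsep i j
    rw [hij, sub_self, abs_zero] at this
    linarith [mul_pos hdist hδ]
  set P := Lagrange.nodal univ y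
  obtain ⟨t, -, ht⟩ := exists_max_image univ (fun i => |P.eval (x i)|) univ_nonempty
  refine ⟨t, ?_⟩
  rw [← abs_prod, ← Lagrange.eval_nodal]
  have hone : 1 ≤ |P.eval (x t)| * (2 ^ n / n ! / δ ^ n) := calc
    1 ≤ ∑ i, |P.eval (x i)| / ∏ j ∈ univ.erase i, |x i - x j| :=
        one_le_sum_abs_eval_div_prod_abs_sub hinj Lagrange.nodal_monic (by simp [P])
    _ ≤ ∑ i : Fin (n + 1), |P.eval (x t)| / ((((i : ℕ)! * (n - i)! : ℕ) : ℝ) * δ ^ n) :=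
        sum_le_sum fun i _ => div_le_div₀ (abs_nonneg _) (ht i (mem_univ i)) (by positivity)
          (factorial_mul_factorial_mul_pow_le_prod_abs_sub hδ.le hsep i)
    _ = |P.eval (x t)| * (2 ^ n / n ! / δ ^ n) := by
        simp only [div_eq_mul_inv, mul_inv, ← mul_sum, ← sum_mul]
        rw [← div_eq_mul_inv (2 ^ n : ℝ), ← sum_inv_factorial_mul_factorial]
  calc (n ! : ℝ) * (δ / 2) ^ n
      ≤ n ! * (δ / 2) ^ n * (|P.eval (x t)| * (2 ^ n / n ! / δ ^ n)) :=
        le_mul_of_one_le_right (by positivity) hone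
    _ = |P.eval (x t)| := by field_simp; rw [div_pow]; field_simp

lemma natCast_mul_le_two_mul
    (hsep : ∀ i j : Fin (n + 1), (Nat.dist i j : ℝ) * δ ≤ |x i - x j|) {d : ℝ}
    (hx : ∀ j, |x j| ≤ d) : (n : ℝ) * δ ≤ 2 * d := by
  have := hsep 0 (Fin.last n)
  simp only [Fin.val_zero, Fin.val_last, Nat.dist_comm 0, Nat.dist_zero_right] at this
  linarith [abs_sub (x 0) (x (Fin.last n)), hx 0, hx (Fin.last n)]

end Separated

lemma sum_abs_coeff_X_sub_C_mul_le (r : ℝ) {P : ℝ[X]} {n : ℕ} (hP : P.natDegree ≤ n) :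
    ∑ i ∈ range (n + 2), |((X - C r) * P).coeff i| ≤
      (1 + |r|) * ∑ i ∈ range (n + 1), |P.coeff i| := by
  have htop : P.coeff (n + 1) = 0 := coeff_eq_zero_of_natDegree_lt (by omega)
  calc ∑ i ∈ range (n + 2), |((X - C r) * P).coeff i|
      ≤ ∑ i ∈ range (n + 2), (|(X * P).coeff i| + |r| * |P.coeff i|) := by
        refine sum_le_sum fun i _ => ?_
        rw [sub_mul, coeff_sub, coeff_C_mul, ← abs_mul]
        exact abs_sub _ _
    _ = (1 + |r|) * ∑ i ∈ range (n + 1), |P.coeff i| := by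
        rw [sum_add_distrib, ← mul_sum, sum_range_succ', sum_range_succ _ (n + 1)]
        simp [coeff_X_mul, htop]
        ring

lemma sum_abs_coeff_multiset_prod_X_sub_C_le (M : Multiset ℝ) {d : ℝ}
    (hM : ∀ r ∈ M, |r| ≤ d) :
    ∑ i ∈ range (M.card + 1), |((M.map fun r => X - C r).prod).coeff i| ≤
      (1 + d) ^ M.card := by
  induction M using Multiset.induction_on with
  | empty => simp
  | cons r M ih =>
    rw [Multiset.map_cons, Multiset.prod_cons, Multiset.card_cons, pow_succ']
    refine (sum_abs_coeff_X_sub_C_mul_le r (natDegree_multiset_prod_X_sub_C_eq_card M).le).trans ?_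
    have hr := hM r (Multiset.mem_cons_self r M)
    have hd : 0 ≤ 1 + d := by linarith [abs_nonneg r]
    gcongr
    exact ih fun s hs => hM s (Multiset.mem_cons_of_mem hs)

lemma abs_eval_multiset_prod_X_sub_C (M : Multiset ℝ) (x : ℝ) :
    |((M.map fun r => X - C r).prod).eval x| = (M.map fun r => |x - r|).prod := by
  induction M using Multiset.induction_on with
  | empty => simp
  | cons r M ih => simp [ih, abs_mul]

lemma eval_multiset_prod_X_sub_C_of_mem {M : Multiset ℝ} {r : ℝ} (hr : r ∈ M) :
    ((M.map fun r => X - C r).prod).eval r = 0 := by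
  rw [← abs_eq_zero, abs_eval_multiset_prod_X_sub_C]
  exact Multiset.prod_eq_zero (Multiset.mem_map.2 ⟨r, hr, by simp⟩)

lemma abs_dotProduct_le {ι : Type*} [Fintype ι] (u v : ι → ℝ) :
    |u ⬝ᵥ v| ≤ (∑ i, |u i|) * √(∑ i, v i ^ 2) := by
  rw [sum_mul]
  refine (abs_sum_le_sum_abs _ _).trans (sum_le_sum fun i _ => ?_)
  rw [abs_mul]
  exact mul_le_mul_of_nonneg_left
    (Real.abs_le_sqrt (single_le_sum (fun j _ => sq_nonneg (v j)) (mem_univ i))) (abs_nonneg _)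

lemma coeff_vecMul_powers {n : ℕ} {W : ℝ[X]} (hW : W.natDegree ≤ n) {ι : Type*} [Fintype ι]
    (x : ι → ℝ) :
    (fun i : Fin (n + 1) => W.coeff i) ᵥ* (of fun (i : Fin (n + 1)) p => x p ^ (i : ℕ)) =
      fun p => W.eval (x p) := by
  ext p
  rw [eval_eq_sum_range' (Nat.lt_succ_of_le hW), ← Fin.sum_univ_eq_sum_range]
  rfl

lemma abs_mul_abs_eval_le_of_eval_eq_zero {n : ℕ} {W : ℝ[X]} (hW : W.natDegree ≤ n)
    {ι κ : Type*} [Fintype ι] [Fintype κ] (y b : ι → ℝ) (x c : κ → ℝ) (t : κ)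
    (hy : ∀ p, W.eval (y p) = 0) (hx : ∀ j ≠ t, W.eval (x j) = 0) :
    |c t| * |W.eval (x t)| ≤ (∑ i ∈ range (n + 1), |W.coeff i|) *
      √(∑ i : Fin (n + 1), (((of fun (i : Fin (n + 1)) p => y p ^ (i : ℕ)) *ᵥ b -
        (of fun (i : Fin (n + 1)) j => x j ^ (i : ℕ)) *ᵥ c) i) ^ 2) := by
  have hpair : (fun i : Fin (n + 1) => W.coeff i) ⬝ᵥ
      ((of fun (i : Fin (n + 1)) p => y p ^ (i : ℕ)) *ᵥ b -
        (of fun (i : Fin (n + 1)) j => x j ^ (i : ℕ)) *ᵥ c) = -(W.eval (x t) * c t) := by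
    rw [dotProduct_sub, dotProduct_mulVec, dotProduct_mulVec, coeff_vecMul_powers hW,
      coeff_vecMul_powers hW, dotProduct, dotProduct, Fintype.sum_eq_zero _ fun p => by simp [hy],
      Fintype.sum_eq_single t fun j hj => by simp [hx j hj], zero_sub]
  rw [← abs_mul, mul_comm, ← abs_neg, ← hpair,
    ← Fin.sum_univ_eq_sum_range (fun i => |W.coeff i|)]
  exact abs_dotProduct_le _ _

lemma exists_abs_le_and_le_abs_sub {x d : ℝ} (hx : |x| ≤ d) :
    ∃ e, |e| ≤ d ∧ d ≤ |x - e| := by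
  have hd : 0 ≤ d := (abs_nonneg x).trans hx
  rcases le_total 0 x with h | h
  · refine ⟨-d, by rw [abs_neg, abs_of_nonneg hd], ?_⟩
    rw [sub_neg_eq_add, abs_of_nonneg (by linarith)]
    linarith
  · refine ⟨d, (abs_of_nonneg hd).le, ?_⟩
    rw [abs_sub_comm, abs_of_nonneg (by linarith)]
    linarith

lemma exists_dual_certificate {k q : ℕ} (hq : q ≤ k) {d δ : ℝ} (hδ : 0 < δ)
    {x : Fin (k + 1) → ℝ} (hx : ∀ j, |x j| ≤ d)
    (hsep : ∀ i j : Fin (k + 1), (Nat.dist i j : ℝ) * δ ≤ |x i - x j|)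
    (y : Fin q → ℝ) (hy : ∀ p, |y p| ≤ d) :
    ∃ (W : ℝ[X]) (t : Fin (k + 1)), W.natDegree ≤ 2 * k ∧ (∀ p, W.eval (y p) = 0) ∧
      (∀ j ≠ t, W.eval (x j) = 0) ∧
      ∑ i ∈ range (2 * k + 1), |W.coeff i| ≤ (1 + d) ^ (2 * k) ∧
      paperZeta (k + 1) * paperXi k * δ ^ (2 * k) ≤ |W.eval (x t)| := by
  have hqk : q + 1 ≤ k + 1 := by omega
  obtain ⟨s, hs⟩ := exists_prod_abs_sub_ge (x := x ∘ Fin.castLE hqk) hδ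
    (fun i j => hsep (Fin.castLE hqk i) (Fin.castLE hqk j)) y
  set t := Fin.castLE hqk s
  obtain ⟨e, he, hfar⟩ := exists_abs_le_and_le_abs_sub (hx t)
  set M := univ.val.map y + (univ.erase t).val.map x + Multiset.replicate (k - q) e
  set W := (M.map fun r => X - C r).prod
  have hcard : M.card = 2 * k := by
    simp [M]
    omega
  have hM : ∀ r ∈ M, |r| ≤ d := by
    simp only [M, Multiset.mem_add, Multiset.mem_map, Multiset.mem_replicate]
    rintro r ((⟨p, -, rfl⟩ | ⟨j, -, rfl⟩) | ⟨-, rfl⟩) <;> solve_by_elim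
  have hroot : ∀ r ∈ M, W.eval r = 0 := fun r => eval_multiset_prod_X_sub_C_of_mem
  refine ⟨W, t, ?_, fun p => hroot _ ?_, fun j hj => hroot _ ?_, ?_, ?_⟩
  · rw [natDegree_multiset_prod_X_sub_C_eq_card, hcard]
  · exact Multiset.mem_add.2 (.inl (Multiset.mem_add.2 (.inl (Multiset.mem_map_of_mem y
      (mem_univ p)))))
  · exact Multiset.mem_add.2 (.inl (Multiset.mem_add.2 (.inr (Multiset.mem_map_of_mem x
      (mem_erase.2 ⟨hj, mem_univ j⟩)))))
  · exact hcard ▸ sum_abs_coeff_multiset_prod_X_sub_C_le M hM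
  rw [abs_eval_multiset_prod_X_sub_C]
  simp only [M, Multiset.map_add, Multiset.prod_add, Multiset.map_map, Function.comp_def,
    prod_map_val, Multiset.map_replicate, Multiset.prod_replicate]
  refine (paperZeta_mul_paperXi_mul_pow_le hq (Nat.lt_succ_iff.1 t.isLt) hδ.le).trans ?_
  gcongr
  · exact hs
  · exact factorial_mul_factorial_mul_pow_le_prod_abs_sub hδ.le hsep t
  · linarith [natCast_mul_le_two_mul hsep hx]

theorem stmt_16_general (k : ℕ) (d : ℝ) (dstar : Fin (k + 1) → ℝ)
    (hmono : StrictMono dstar) (hin : ∀ j, -d ≤ dstar j ∧ dstar j ≤ d) (dmin : ℝ)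
    (hdmin : IsLeast {x : ℝ | ∃ i j : Fin (k + 1), i ≠ j ∧ x = |dstar i - dstar j|} dmin)
    (m : ℝ) (hm : 0 < m) (astar : Fin (k + 1) → ℝ) (ha : ∀ j, m ≤ |astar j|)
    (q : ℕ) (hq : q ≤ k) (dd : Fin q → ℝ) (hdd : ∀ p, |dd p| ≤ d) (a : Fin q → ℝ) :
    Real.sqrt (∑ i : Fin (2 * k + 1),
        (((Matrix.of fun (i : Fin (2 * k + 1)) (p : Fin q) => dd p ^ (i : ℕ)).mulVec a -
          (Matrix.of fun (i : Fin (2 * k + 1)) (j : Fin (k + 1)) =>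
            dstar j ^ (i : ℕ)).mulVec astar) i) ^ 2) ≥
      paperZeta (k + 1) * paperXi k * m * dmin ^ (2 * k) / (1 + d) ^ (2 * k) := by
  obtain ⟨⟨i, j, hij, hdmin_eq⟩, hleast⟩ := hdmin
  have hδ : 0 < dmin := hdmin_eq ▸ abs_pos.2 (sub_ne_zero.2 (hmono.injective.ne hij))
  have hsep := natDist_mul_le_abs_sub hmono fun i' j' hij' => hleast ⟨i', j', hij', rfl⟩
  obtain ⟨W, t, hdeg, hW_dd, hW_dstar, hL1, hWt⟩ :=
    exists_dual_certificate hq hδ (fun j => abs_le.2 (hin j)) hsep dd hdd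
  have hd : 0 ≤ 1 + d := by linarith [(hin i).1.trans (hin i).2]
  refine div_le_of_le_mul₀ (by positivity) (Real.sqrt_nonneg _) ?_
  calc paperZeta (k + 1) * paperXi k * m * dmin ^ (2 * k)
      = m * (paperZeta (k + 1) * paperXi k * dmin ^ (2 * k)) := by ring
    _ ≤ |astar t| * |W.eval (dstar t)| :=
        (mul_le_mul_of_nonneg_left hWt hm.le).trans
          (mul_le_mul_of_nonneg_right (ha t) (abs_nonneg _))
    _ ≤ _ := abs_mul_abs_eval_le_of_eval_eq_zero hdeg dd a dstar astar t hW_dd hW_dstar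
    _ ≤ (1 + d) ^ (2 * k) * _ := by gcongr
    _ = _ := mul_comm _ _

/-- Lower bound for nonlinear approximation in Vandermonde space: a combination of `k+1`
separated Vandermonde vectors of length `2k+1` with coefficients of modulus at least `m`
cannot be approximated by any combination of at most `k` Vandermonde vectors with nodes in
`[-d, d]` better than `ζ(k+1)·ξ(k)·m·(d*_min)^(2k)/(1+d)^(2k)` in the Euclidean norm. -/
theorem stmt_16 (k : ℕ) (hk : 1 ≤ k) (d : ℝ) (dstar : Fin (k + 1) → ℝ)
    (hmono : StrictMono dstar) (hin : ∀ j, -d ≤ dstar j ∧ dstar j ≤ d) (dmin : ℝ)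
    (hdmin : IsLeast {x : ℝ | ∃ i j : Fin (k + 1), i ≠ j ∧ x = |dstar i - dstar j|} dmin)
    (m : ℝ) (hm : 0 < m) (astar : Fin (k + 1) → ℝ) (ha : ∀ j, m ≤ |astar j|)
    (q : ℕ) (hq : q ≤ k) (dd : Fin q → ℝ) (hdd : ∀ p, |dd p| ≤ d) (a : Fin q → ℝ) :
    Real.sqrt (∑ i : Fin (2 * k + 1),
        (((Matrix.of fun (i : Fin (2 * k + 1)) (p : Fin q) => dd p ^ (i : ℕ)).mulVec a -
          (Matrix.of fun (i : Fin (2 * k + 1)) (j : Fin (k + 1)) =>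
            dstar j ^ (i : ℕ)).mulVec astar) i) ^ 2) ≥
      paperZeta (k + 1) * paperXi k * m * dmin ^ (2 * k) / (1 + d) ^ (2 * k) :=
  stmt_16_general k d dstar hmono hin dmin hdmin m hm astar ha q hq dd hdd a
end
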